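/- arXiv:1912.09724 — 6 statements merged into one kernel-verified Lean document; each statement's English description precedes it below -/
import Mathlib

section
/- For every belt assignment b of an instance of Belt Makespan, the makespan M(b) satisfies M(b) ≥ max{ Σ_{A∈𝒯} d_A , (r*−1)·N + Σ_{A∈𝒯} σ_A } + N − 1, where r* := max_{A∈𝒯} ⌈d_A / c_A⌉ and σ_A := max{0, d_A − (r*−1)·c_A}. In particular this bound holds for the optimal makespan. -/
open Finset

variable {α : Type*}

/-- A mould of type `A` is injected in step `i`: `b i = A` and either `i < N`
or the slot `N` steps earlier did not carry `A`. -/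
def Injected (N : ℕ) (b : ℕ → Option α) (A : α) (i : ℕ) : Prop :=
  b i = some A ∧ (i < N ∨ b (i - N) ≠ some A)

/-- The number of moulds of type `A` used by the belt function `b`. -/
noncomputable def MouldsUsed (N : ℕ) (b : ℕ → Option α) (A : α) : ℕ :=
  {i | Injected N b A i}.ncard

/-- A belt assignment: (i) each type `A` occurs exactly `d A` times, (ii) an
injected mould stays on the belt (period `N`) until the demand of its type is
met, (iii) at most `c A` moulds of type `A` are used. -/
def IsBeltAssignment (N : ℕ) (d c : α → ℕ) (b : ℕ → Option α) : Prop :=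
  (∀ A : α, {i | b i = some A}.Finite) ∧
  (∀ A : α, {i | b i = some A}.ncard = d A) ∧
  (∀ (i : ℕ) (A : α), b i = some A →
      b (i + N) = some A ∨ {j | b j = some A ∧ j < i + N}.ncard = d A) ∧
  (∀ A : α, MouldsUsed N b A ≤ c A)

/-- The makespan of `b`: the smallest `s` such that for every type `A` all of
its demand appears among steps `0, …, s - N - 1`. -/
noncomputable def Makespan (N : ℕ) (d : α → ℕ) (b : ℕ → Option α) : ℕ :=
  sInf {s | ∀ A : α, {j | b j = some A ∧ j < s - N}.ncard = d A}

/-- Property (E): every injection happens before every empty slot. -/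
def PropE (N : ℕ) (b : ℕ → Option α) : Prop :=
  ∀ (A : α) (i e : ℕ), Injected N b A i → b e = none → i < e

/-- Property (F): if there is an empty slot `e` and strictly fewer than `c A`
moulds of type `A` are used, then `A` does not occur at any step `i ≥ e`. -/
def PropF (N : ℕ) (c : α → ℕ) (b : ℕ → Option α) : Prop :=
  ∀ (e : ℕ) (A : α), b e = none → MouldsUsed N b A < c A → ∀ i, e ≤ i → b i ≠ some A

/-- The maximal number of rounds `r* = max_A ⌈d A / c A⌉` needed by some type. -/
def rstar [Fintype α] (d c : α → ℕ) : ℕ :=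
  Finset.univ.sup fun A => (d A + c A - 1) / c A

/-!
Every occurrence of type `A` lies at a step `i + N q` for some injection step `i` of `A`,
so the first `(r* - 1) N` steps carry at most `(r* - 1) c_A` copies of `A`, and at least `σ_A`
copies of `A` lie in `[(r* - 1) N, M(b) - N)`. Since every step carries at most one mould,
summing over the types shows that `[0, M(b) - N)` has length at least `Σ_A d_A` and
`[(r* - 1) N, M(b) - N)` length at least `Σ_A σ_A`.
-/

section Belt

variable {N : ℕ} {b : ℕ → Option α} {A : α}

lemma exists_injected_add_mul (hN : 0 < N) {j : ℕ} (hj : b j = some A) :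
    ∃ i q, Injected N b A i ∧ j = i + N * q := by
  induction j using Nat.strong_induction_on with
  | _ j ih =>
    by_cases hinj : Injected N b A j
    · exact ⟨j, 0, hinj, by simp⟩
    · obtain ⟨hjN, hprev⟩ : N ≤ j ∧ b (j - N) = some A := by
        simpa [Injected, hj] using hinj
      obtain ⟨i, q, hi, hq⟩ := ih (j - N) (by omega) hprev
      exact ⟨i, q + 1, hi, by rw [Nat.mul_succ]; omega⟩

lemma card_filter_range_mul_le [DecidableEq α] (hfin : {i | b i = some A}.Finite) (r : ℕ) :
    #{j ∈ range (r * N) | b j = some A} ≤ MouldsUsed N b A * r := by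
  have hIfin : {i | Injected N b A i}.Finite := hfin.subset fun i hi => hi.1
  set I := hIfin.toFinset
  have hcover : {j ∈ range (r * N) | b j = some A} ⊆
      I.biUnion fun i => (range r).image (i + N * ·) := by
    intro j hj
    rw [mem_filter, mem_range] at hj
    have hN : 0 < N := Nat.pos_of_ne_zero (by rintro rfl; simp at hj)
    obtain ⟨i, q, hi, rfl⟩ := exists_injected_add_mul hN hj.2
    have hq : q < r := Nat.lt_of_mul_lt_mul_left (a := N) (by rw [mul_comm N r]; omega)
    exact mem_biUnion.2 ⟨i, hIfin.mem_toFinset.2 hi, mem_image.2 ⟨q, mem_range.2 hq, rfl⟩⟩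
  calc #{j ∈ range (r * N) | b j = some A}
      ≤ ∑ i ∈ I, #((range r).image (i + N * ·)) := (card_le_card hcover).trans card_biUnion_le
    _ ≤ ∑ _i ∈ I, r := sum_le_sum fun i _ => card_image_le.trans (card_range r).le
    _ = MouldsUsed N b A * r := by
      rw [sum_const, smul_eq_mul, MouldsUsed, Set.ncard_eq_toFinset_card _ hIfin]

lemma card_filter_range_sub_mul_le_card_filter_Ico [DecidableEq α] {c : ℕ}
    (hfin : {i | b i = some A}.Finite) (hcap : MouldsUsed N b A ≤ c) (r T : ℕ) :
    #{j ∈ range T | b j = some A} - r * c ≤ #{j ∈ Ico (r * N) T | b j = some A} := by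
  have hsplit : #{j ∈ range T | b j = some A} ≤
      #{j ∈ range (r * N) | b j = some A} + #{j ∈ Ico (r * N) T | b j = some A} := by
    rw [range_eq_Ico, range_eq_Ico, ← card_union_of_disjoint
      (disjoint_filter_filter (Ico_disjoint_Ico_consecutive _ _ _)), ← filter_union]
    exact card_le_card (filter_subset_filter _ Ico_subset_Ico_union_Ico)
  have hfirst : #{j ∈ range (r * N) | b j = some A} ≤ r * c :=
    (card_filter_range_mul_le hfin r).trans
      (by rw [mul_comm r]; exact Nat.mul_le_mul_right _ hcap)
  omega

lemma sum_card_filter_eq_some_le [Fintype α] [DecidableEq α] (b : ℕ → Option α)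
    (s : Finset ℕ) : ∑ A : α, #{j ∈ s | b j = some A} ≤ #s := by
  rw [card_eq_sum_card_fiberwise (f := b) (t := univ) (fun _ _ => mem_coe.2 (mem_univ _)),
    Fintype.sum_option]
  exact le_add_self

lemma card_filter_range_makespan_sub [Finite α] [DecidableEq α] {d : α → ℕ}
    (hfin : ∀ A, {i | b i = some A}.Finite) (hcount : ∀ A, {i | b i = some A}.ncard = d A)
    (A : α) : #{j ∈ range (Makespan N d b - N) | b j = some A} = d A := by
  have hne : {s | ∀ A : α, {j | b j = some A ∧ j < s - N}.ncard = d A}.Nonempty := by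
    obtain ⟨M, hM⟩ := (Set.finite_iUnion hfin).bddAbove
    refine ⟨M + 1 + N, fun A => ?_⟩
    convert hcount A using 2
    refine Set.ext fun j => ⟨And.left, fun hj => ⟨hj, ?_⟩⟩
    have := hM (Set.mem_iUnion.2 ⟨A, hj⟩)
    omega
  have hmem : {j | b j = some A ∧ j < Makespan N d b - N}.ncard = d A := Nat.sInf_mem hne A
  rw [← hmem, ← Set.ncard_coe_finset]
  congr 1
  ext j
  simp [and_comm]

end Belt

lemma exists_rstar_sub_one_mul_lt [Fintype α] [Nonempty α] {d : α → ℕ} (hd : ∀ A, 0 < d A)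
    (c : α → ℕ) : ∃ A, (rstar d c - 1) * c A < d A := by
  obtain ⟨A, -, hA⟩ := exists_mem_eq_sup univ univ_nonempty fun A => (d A + c A - 1) / c A
  refine ⟨A, ?_⟩
  have hdiv := Nat.div_mul_le_self (d A + c A - 1) (c A)
  rw [rstar, hA, Nat.sub_mul, one_mul]
  have := hd A
  omega

theorem statement0_general [Fintype α] [Nonempty α] (N : ℕ)
    (d c : α → ℕ) (hd : ∀ A, 0 < d A)
    (b : ℕ → Option α) (hb : IsBeltAssignment N d c b) :
    max (∑ A : α, d A)
        ((rstar d c - 1) * N + ∑ A : α, (d A - (rstar d c - 1) * c A)) + N - 1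
      ≤ Makespan N d b := by
  classical
  obtain ⟨hfin, hcount, -, hcap⟩ := hb
  set r := rstar d c
  set T := Makespan N d b - N with hT
  have hdemand : ∀ A, #{j ∈ range T | b j = some A} = d A :=
    card_filter_range_makespan_sub hfin hcount
  have htotal : ∑ A, d A ≤ T := by
    simpa only [hdemand, card_range] using sum_card_filter_eq_some_le b (range T)
  have hσ (A : α) : d A - (r - 1) * c A ≤ #{j ∈ Ico ((r - 1) * N) T | b j = some A} :=
    hdemand A ▸ card_filter_range_sub_mul_le_card_filter_Ico (hfin A) (hcap A) (r - 1) T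
  have hrest : ∑ A, (d A - (r - 1) * c A) ≤ T - (r - 1) * N := by
    simpa only [Nat.card_Ico] using
      (sum_le_sum fun A _ => hσ A).trans (sum_card_filter_eq_some_le b _)
  obtain ⟨A₀, hA₀⟩ : ∃ A, (r - 1) * c A < d A := exists_rstar_sub_one_mul_lt hd c
  have hσ₀ : d A₀ - (r - 1) * c A₀ ≤ ∑ A, (d A - (r - 1) * c A) :=
    single_le_sum (fun A _ => Nat.zero_le (d A - (r - 1) * c A)) (mem_univ A₀)
  have hd₀ : d A₀ ≤ ∑ A, d A := single_le_sum (fun A _ => Nat.zero_le (d A)) (mem_univ A₀)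
  -- `σ_{A₀} > 0` rules out a truncated `T - (r - 1) * N`, and `d A₀ > 0` a truncated `T`.
  omega

/-- **Lemma 2 (lower bound).** For every belt assignment `b`,
`M(b) ≥ max{Σ_A d_A, (r*-1)·N + Σ_A σ_A} + N - 1` where
`σ_A = max{0, d_A - (r*-1)·c_A}`. In particular the optimal makespan obeys
this bound. -/
theorem statement0 [Fintype α] [Nonempty α] (N : ℕ) (hN : 0 < N)
    (d c : α → ℕ) (hd : ∀ A, 0 < d A) (hc : ∀ A, 0 < c A)
    (b : ℕ → Option α) (hb : IsBeltAssignment N d c b) :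
    max (∑ A : α, d A)
        ((rstar d c - 1) * N + ∑ A : α, (d A - (rstar d c - 1) * c A)) + N - 1
      ≤ Makespan N d b :=
  statement0_general N d c hd b hb
end

section
/- For every belt assignment b, every type A ∈ 𝒯 and every non-negative integer r, the number of steps i ∈ {rN, rN+1, …, rN+N−1} with b(i) = A is at most c_A. (Every round of the belt contains at most c_A moulds of any type A.) -/
open Finset

variable {α : Type*}

open Classical in
noncomputable def firstStep (N : ℕ) (hN : 0 < N) (b : ℕ → Option α) (A : α) (i : ℕ) : ℕ :=
  if i < N ∨ b (i - N) ≠ some A then i else firstStep N hN b A (i - N)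
termination_by i
decreasing_by
  rename_i h
  push_neg at h
  exact Nat.sub_lt (lt_of_lt_of_le hN h.1) hN

lemma firstStep_spec (N : ℕ) (hN : 0 < N) (b : ℕ → Option α) (A : α) :
    ∀ i, b i = some A →
      (b (firstStep N hN b A i) = some A ∧
        (firstStep N hN b A i < N ∨ b (firstStep N hN b A i - N) ≠ some A)) ∧
      firstStep N hN b A i % N = i % N ∧ firstStep N hN b A i ≤ i := by
  intro i
  induction i using Nat.strong_induction_on with
  | _ i ih =>
    intro hbi
    rw [firstStep]
    split
    · exact ⟨⟨hbi, by assumption⟩, rfl, le_refl _⟩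
    · rename_i h
      push_neg at h
      have hlt : i - N < i := Nat.sub_lt (lt_of_lt_of_le hN h.1) hN
      obtain ⟨h1, h2, h3⟩ := ih (i - N) hlt h.2
      refine ⟨h1, ?_, le_trans h3 (Nat.sub_le _ _)⟩
      rw [h2]
      conv_rhs => rw [← Nat.sub_add_cancel h.1]
      rw [Nat.add_mod_right]

/-- Every round of a belt assignment contains at most `c A` moulds of any
type `A`: for every `r`, among the steps `rN, rN+1, …, rN+N-1` at most `c A`
carry type `A`. -/
theorem statement2 (N : ℕ) (hN : 0 < N)
    (d c : α → ℕ) (hd : ∀ A, 0 < d A) (hc : ∀ A, 0 < c A)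
    (b : ℕ → Option α) (hb : IsBeltAssignment N d c b) (A : α) (r : ℕ) :
    {i | b i = some A ∧ r * N ≤ i ∧ i < r * N + N}.ncard ≤ c A := by
  obtain ⟨hfin, -, -, hcap⟩ := hb
  have htfin : {i | Injected N b A i}.Finite :=
    (hfin A).subset (fun i hi => hi.1)
  have mod_eq : ∀ i, r * N ≤ i → i < r * N + N → i % N = i - r * N := by
    intro i h1 h2
    conv_lhs => rw [show i = r * N + (i - r * N) by omega]
    rw [Nat.add_comm, Nat.add_mul_mod_self_right]
    exact Nat.mod_eq_of_lt (by omega)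
  have key : {i | b i = some A ∧ r * N ≤ i ∧ i < r * N + N}.ncard ≤
      {i | Injected N b A i}.ncard := by
    refine Set.ncard_le_ncard_of_injOn (firstStep N hN b A) ?_ ?_ htfin
    · rintro i ⟨hi, -, -⟩
      exact (firstStep_spec N hN b A i hi).1
    · rintro i ⟨hi, hi1, hi2⟩ j ⟨hj, hj1, hj2⟩ heq
      have h1 := (firstStep_spec N hN b A i hi).2.1
      have h2 := (firstStep_spec N hN b A j hj).2.1
      have hij : i % N = j % N := by rw [← h1, ← h2, heq]
      rw [mod_eq i hi1 hi2, mod_eq j hj1 hj2] at hij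
      omega
  have := hcap A
  unfold MouldsUsed at this
  exact key.trans this
end

section
/- If b is a belt assignment with makespan M(b), then there is a belt assignment b' with makespan M(b') ≤ M(b) satisfying both Property (E) and Property (F). -/
open Finset

variable {α : Type*}

/-
Fix the horizon `T = M(b) - N`, from which on `b` is empty, and among the belt assignments that are
empty from `T` on pick one minimising the total number of empty slots in the prefixes of length at
most `T` (`gapWeight`); its makespan is at most `M(b)`.

In such a minimiser an empty slot is followed by an empty slot `N` steps later: otherwise moving the
last slot of the type found there into the hole would be an improvement. Now take a type `Z` each
of whose slots is followed by `Z` or by an empty slot. The slots that are empty or carry `Z` form an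
up-set in every column (residue class mod `N`), and pouring `d Z` moulds bottom-up into the
`min (c Z) N` columns whose free part starts lowest gives an admissible placement whose prefix
counts dominate those of every admissible placement, in particular of the actual `Z`-slots; by
minimality the two coincide. The poured moulds are injected at column bases, all below every free
slot outside the poured part, whence (E) for `Z`; and when a mould is spare, either a chosen column
is left untouched or every column is chosen, so every `Z`-slot precedes every free slot, whence (F).
The type of the last injection satisfies the hypothesis on `Z`, which gives (E); granted (E), so
does every type occurring after an empty slot, which gives (F).

With infinitely many types no finite horizon serves every demand, so every makespan is `sInf ∅ = 0`,
and a belt without empty slots, each type forming a single run in one column, does the job.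
-/

section

open scoped Classical

/-! ### Initial segments and prefix counts -/

def initSeg (s : Set ℕ) (k : ℕ) : Set ℕ := {x | x ∈ s ∧ Nat.count (· ∈ s) x < k}

section InitSeg

variable {s : Set ℕ} {k : ℕ}

lemma initSeg_subset : initSeg s k ⊆ s := fun _ hx => hx.1

lemma lt_of_mem_initSeg {x y : ℕ} (hx : x ∈ initSeg s k) (hy : y ∈ s) (hy' : y ∉ initSeg s k) :
    x < y :=
  Nat.lt_of_count_lt_count (hx.2.trans_le (not_lt.1 fun h => hy' ⟨hy, h⟩))

lemma mem_initSeg_of_lt {x y : ℕ} (hx : x ∈ initSeg s k) (hy : y ∈ s) (hyx : y < x) :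
    y ∈ initSeg s k :=
  by_contra fun hy' => (lt_of_mem_initSeg hx hy hy').not_gt hyx

lemma count_initSeg (n : ℕ) :
    Nat.count (· ∈ initSeg s k) n = min k (Nat.count (· ∈ s) n) := by
  induction n with
  | zero => simp
  | succ n ih =>
    rw [Nat.count_succ, Nat.count_succ, ih]
    by_cases hn : n ∈ s
    · simp only [initSeg, Set.mem_ofPred_eq, hn, true_and, if_true]
      split_ifs <;> omega
    · simp [initSeg, hn]

lemma ncard_eq_count_of_subset_Iio {n : ℕ} (h : s ⊆ Set.Iio n) :
    s.ncard = Nat.count (· ∈ s) n := by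
  rw [Nat.count_eq_card_filter_range, ← Set.ncard_coe_finset]
  congr 1
  ext x
  simpa using fun hx => h hx

lemma subset_Iio_of_ncard_le_count {n : ℕ} (hs : s.Finite) (h : s.ncard ≤ Nat.count (· ∈ s) n) :
    s ⊆ Set.Iio n := by
  have hsub : (((Finset.range n).filter (· ∈ s) : Finset ℕ) : Set ℕ) ⊆ s := by
    intro x hx
    simp only [Finset.coe_filter, Finset.mem_range] at hx
    exact hx.2
  have heq := Set.eq_of_subset_of_ncard_le hsub
    (by rwa [Set.ncard_coe_finset, ← Nat.count_eq_card_filter_range]) hs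
  intro x hx
  rw [← heq] at hx
  simp only [Finset.coe_filter, Finset.mem_range] at hx
  exact hx.1

lemma initSeg_subset_Iio {n : ℕ} (h : k ≤ Nat.count (· ∈ s) n) : initSeg s k ⊆ Set.Iio n :=
  fun _ hx => Nat.lt_of_count_lt_count (hx.2.trans_le h)

lemma ncard_initSeg {n : ℕ} (h : k ≤ Nat.count (· ∈ s) n) : (initSeg s k).ncard = k := by
  rw [ncard_eq_count_of_subset_Iio (initSeg_subset_Iio h), count_initSeg]
  omega

lemma ncard_initSeg_of_subset_Iio {n : ℕ} (h : s ⊆ Set.Iio n) :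
    (initSeg s k).ncard = min k s.ncard := by
  rw [ncard_eq_count_of_subset_Iio ((initSeg_subset).trans h), count_initSeg,
    ncard_eq_count_of_subset_Iio h]

end InitSeg

lemma Finset.sum_le_sum_of_card_le {ι : Type*} {s t : Finset ι} {g : ι → ℕ}
    (hcard : s.card ≤ t.card) (hle : ∀ i ∈ s, ∀ j ∈ t, g i ≤ g j) :
    ∑ i ∈ s, g i ≤ ∑ j ∈ t, g j := by
  rcases t.eq_empty_or_nonempty with rfl | ht
  · simp_all
  obtain ⟨j₀, hj₀, hmin⟩ := t.exists_min_image g ht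
  calc ∑ i ∈ s, g i ≤ s.card • g j₀ := Finset.sum_le_card_nsmul _ _ _ fun i hi => hle i hi j₀ hj₀
    _ ≤ t.card • g j₀ := nsmul_le_nsmul_left (Nat.zero_le _) hcard
    _ ≤ ∑ j ∈ t, g j := Finset.card_nsmul_le_sum _ _ _ hmin

lemma Finset.ncard_initSeg (B : Finset ℕ) (k : ℕ) : (initSeg ↑B k).ncard = min k B.card := by
  obtain ⟨n, hn⟩ := B.finite_toSet.bddAbove
  rw [← Set.ncard_coe_finset B]
  exact ncard_initSeg_of_subset_Iio fun x hx => Nat.lt_succ_of_le (hn hx)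

lemma Finset.card_filter_initSeg (B : Finset ℕ) (k : ℕ) :
    (B.filter (· ∈ initSeg ↑B k)).card = min k B.card := by
  rw [← Set.ncard_coe_finset, ← Finset.ncard_initSeg]
  congr 1
  ext x
  simpa using fun h => Finset.mem_coe.mp (initSeg_subset h)

lemma sum_le_sum_initSeg {k : ℕ} {B C : Finset ℕ} {g : ℕ → ℕ} (hg : Antitone g) (hCB : C ⊆ B)
    (hCk : C.card ≤ k) : ∑ v ∈ C, g v ≤ ∑ v ∈ B.filter (· ∈ initSeg ↑B k), g v := by
  set S := B.filter (· ∈ initSeg ↑B k)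
  have hcard : C.card ≤ S.card := by
    rw [Finset.card_filter_initSeg]
    exact le_min hCk (Finset.card_le_card hCB)
  rw [← Finset.sum_inter_add_sum_sdiff C S, ← Finset.sum_inter_add_sum_sdiff S C,
    Finset.inter_comm]
  gcongr 1
  refine Finset.sum_le_sum_of_card_le ?_ fun x hx y hy => hg ?_
  · have h1 := Finset.card_sdiff_add_card_inter C S
    have h2 := Finset.card_sdiff_add_card_inter S C
    rw [Finset.inter_comm] at h2
    omega
  · simp only [S, Finset.mem_sdiff, Finset.mem_filter] at hx hy
    exact (lt_of_mem_initSeg hy.1.2 (hCB hx.1) fun h => hx.2 ⟨hCB hx.1, h⟩).le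

lemma antitone_card_column (N m : ℕ) :
    Antitone fun v => #{p ∈ range m | v ≤ p ∧ p % N = v % N} := by
  intro v w hvw
  refine Finset.card_le_card_of_injOn (fun p => p - (w - v)) (fun p hp => ?_)
    (fun p hp q hq h => ?_)
  · simp only [Finset.coe_filter, Finset.mem_range, Set.mem_ofPred_eq] at hp ⊢
    obtain ⟨t, ht⟩ := (Nat.modEq_iff_dvd' hp.2.1).mp hp.2.2.symm
    have : p - (w - v) = v + N * t := by omega
    refine ⟨by omega, by omega, ?_⟩
    rw [this, Nat.add_mul_mod_self_left]
  · simp only [Finset.coe_filter, Finset.mem_range, Set.mem_ofPred_eq] at hp hq h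
    omega

lemma Nat.count_add_count_eq {p q p' q' : ℕ → Prop} [DecidablePred p] [DecidablePred q]
    [DecidablePred p'] [DecidablePred q']
    (h : ∀ i, ((if p i then 1 else 0) + if q i then 1 else 0) =
      (if p' i then 1 else 0) + if q' i then 1 else 0) (n : ℕ) :
    Nat.count p n + Nat.count q n = Nat.count p' n + Nat.count q' n := by
  induction n with
  | zero => simp
  | succ n ih =>
    rw [Nat.count_succ, Nat.count_succ, Nat.count_succ, Nat.count_succ]
    have := h n
    omega

lemma Set.eq_of_count_eq {s t : Set ℕ} (h : ∀ n, Nat.count (· ∈ s) n = Nat.count (· ∈ t) n) :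
    s = t := by
  ext x
  have := h (x + 1)
  rw [Nat.count_succ, Nat.count_succ, h x] at this
  by_cases hs : x ∈ s <;> by_cases ht : x ∈ t <;> simp_all

lemma count_le_ncard {s : Set ℕ} (hs : s.Finite) (n : ℕ) : Nat.count (· ∈ s) n ≤ s.ncard := by
  rw [Set.ncard_eq_toFinset_card s hs]
  exact Nat.count_le_card (p := (· ∈ s)) hs n

/-! ### Slot sets of a single type -/

def heads (N : ℕ) (S : Set ℕ) : Set ℕ := {i | i ∈ S ∧ (i < N ∨ i - N ∉ S)}

def StaysUntilDone (N : ℕ) (S : Set ℕ) : Prop := ∀ p ∈ S, p + N ∈ S ∨ ∀ q ∈ S, q < p + N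

lemma heads_subset {N : ℕ} {S : Set ℕ} : heads N S ⊆ S := fun _ h => h.1

lemma ncard_image_le_ncard_heads {N : ℕ} (hN : 0 < N) {S : Set ℕ} (hS : S.Finite) {f : ℕ → ℕ}
    (hf : ∀ p, N ≤ p → f (p - N) = f p) : (f '' S).ncard ≤ (heads N S).ncard := by
  refine (Set.ncard_le_ncard ?_ ((hS.subset heads_subset).image f)).trans
    (Set.ncard_image_le (hS.subset heads_subset))
  rintro _ ⟨p, hp, rfl⟩
  have hne : {q | q ∈ S ∧ f q = f p}.Nonempty := ⟨p, hp, rfl⟩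
  obtain ⟨hhS, hhf⟩ := Nat.sInf_mem hne
  refine ⟨_, ⟨hhS, ?_⟩, hhf⟩
  by_contra! h
  have := Nat.sInf_le (show _ ∈ {q | q ∈ S ∧ f q = f p} from ⟨h.2, (hf _ h.1).trans hhf⟩)
  omega

structure IsBeltSlotSet (N d c : ℕ) (S : Set ℕ) : Prop where
  finite : S.Finite
  ncard_eq : S.ncard = d
  staysUntilDone : StaysUntilDone N S
  ncard_heads_le : (heads N S).ncard ≤ c

lemma ncard_sep_lt_eq_iff {S : Set ℕ} (hS : S.Finite) {n : ℕ} :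
    {j | j ∈ S ∧ j < n}.ncard = S.ncard ↔ ∀ q ∈ S, q < n := by
  refine ⟨fun h q hq => ?_, fun h => congrArg Set.ncard (Set.ext fun j =>
    ⟨fun hj => hj.1, fun hj => ⟨hj, h j hj⟩⟩)⟩
  have heq := Set.eq_of_subset_of_ncard_le (fun j (hj : j ∈ S ∧ j < n) => hj.1) h.ge hS
  exact (heq.symm ▸ hq : q ∈ {j | j ∈ S ∧ j < n}).2

section MoveMax

variable {N d c e M : ℕ} {S : Set ℕ}

lemma isBeltSlotSet_insert_diff_max (hN : 0 < N) (hS : IsBeltSlotSet N d c S) (he : e ∉ S)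
    (heN : e + N ∈ S) (hM : M ∈ S) (hle : ∀ q ∈ S, q ≤ M) :
    IsBeltSlotSet N d c (insert e (S \ {M})) := by
  have heM : e + N ≤ M := hle _ heN
  have hlt : ∀ q ∈ insert e (S \ {M}), q < M := by
    rintro q (rfl | ⟨hq, hqM⟩)
    · omega
    · exact (hle q hq).lt_of_ne hqM
  refine ⟨(hS.finite.sdiff).insert e, ?_, ?_, ?_⟩
  · rw [Set.ncard_insert_of_notMem (fun h => he h.1) hS.finite.sdiff,
      Set.ncard_sdiff_singleton_of_mem hM, hS.ncard_eq]
    have := hS.ncard_eq ▸ (Set.ncard_pos hS.finite).mpr ⟨M, hM⟩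
    omega
  · intro p hp
    by_cases hpN : p + N ∈ S
    · by_cases hpM : p + N = M
      · exact Or.inr fun q hq => hpM ▸ hlt q hq
      · exact Or.inl (Or.inr ⟨hpN, hpM⟩)
    · have hpS : p ∈ S := by
        rcases hp with rfl | ⟨hp, -⟩
        · exact absurd heN hpN
        · exact hp
      refine Or.inr fun q hq => ?_
      rcases hS.staysUntilDone p hpS with h | h
      · exact absurd h hpN
      rcases hq with rfl | ⟨hq, -⟩
      · exact lt_of_lt_of_le (by omega) (h _ heN).le
      · exact h q hq
  · have hsub : heads N (insert e (S \ {M})) ⊆ insert e (heads N S \ {e + N}) := by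
      rintro p ⟨hp, hhead⟩
      rcases hp with rfl | ⟨hpS, hpM⟩
      · exact Set.mem_insert _ _
      refine Or.inr ⟨⟨hpS, ?_⟩, fun hpe => ?_⟩
      · by_cases hpN : p < N
        · exact Or.inl hpN
        refine Or.inr fun hprev => ?_
        rcases hhead with h | h
        · exact hpN h
        · refine h (Or.inr ⟨hprev, fun hM' => ?_⟩)
          have := hle p hpS
          rw [Set.mem_singleton_iff] at hM'
          omega
      · rw [Set.mem_singleton_iff] at hpe
        subst hpe
        rcases hhead with h | h
        · omega
        · exact h (by rw [Nat.add_sub_cancel]; exact Set.mem_insert _ _)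
    have heNhead : e + N ∈ heads N S := ⟨heN, Or.inr (by rwa [Nat.add_sub_cancel])⟩
    have hfin : (heads N S).Finite := hS.finite.subset heads_subset
    calc (heads N (insert e (S \ {M}))).ncard
        ≤ (insert e (heads N S \ {e + N})).ncard := Set.ncard_le_ncard hsub (hfin.sdiff.insert e)
      _ ≤ (heads N S \ {e + N}).ncard + 1 := Set.ncard_insert_le _ _
      _ = (heads N S).ncard := by
        rw [Set.ncard_sdiff_singleton_of_mem heNhead]
        have := (Set.ncard_pos hfin).mpr ⟨_, heNhead⟩
        omega
      _ ≤ c := hS.ncard_heads_le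

lemma count_le_count_insert_diff (he : e ∉ S) (hM : M ∈ S) (heM : e < M) (m : ℕ) :
    Nat.count (· ∈ S) m ≤ Nat.count (· ∈ insert e (S \ {M})) m := by
  have key := Nat.count_add_count_eq (p := (· ∈ insert e (S \ {M}))) (q := (· = M))
    (p' := (· ∈ S)) (q' := (· = e)) (fun i => by
      by_cases hie : i = e
      · subst hie; simp [he, heM.ne]
      · by_cases hiM : i = M
        · subst hiM; simp [hM, hie]
        · simp [hie, hiM]) m
  have : Nat.count (· = M) m ≤ Nat.count (· = e) m := by
    simp only [Nat.count_eq_card_filter_range, Finset.filter_eq', Finset.mem_range]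
    split_ifs <;> simp; omega
  omega

end MoveMax

/-! ### Pouring a type into a column up-set -/

structure IsColumnUpset (N : ℕ) (F : Set ℕ) : Prop where
  pos : 0 < N
  add_mem : ∀ p ∈ F, p + N ∈ F
  eventually_mem : ∃ T, ∀ p, T ≤ p → p ∈ F

section Pour

variable {N : ℕ} {F : Set ℕ}

noncomputable def colBase (N : ℕ) (F : Set ℕ) (p : ℕ) : ℕ := sInf {q | q ∈ F ∧ q % N = p % N}

lemma IsColumnUpset.colBase_spec (hF : IsColumnUpset N F) (p : ℕ) :
    colBase N F p ∈ F ∧ colBase N F p % N = p % N := by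
  obtain ⟨T, hT⟩ := hF.eventually_mem
  exact Nat.sInf_mem (s := {q | q ∈ F ∧ q % N = p % N}) ⟨p + T * N,
    hT _ (le_add_left (Nat.le_mul_of_pos_right T hF.pos)), Nat.add_mul_mod_self_right p T N⟩

lemma colBase_le {p q : ℕ} (hq : q ∈ F) (h : q % N = p % N) : colBase N F p ≤ q :=
  Nat.sInf_le ⟨hq, h⟩

lemma colBase_congr {p q : ℕ} (h : p % N = q % N) : colBase N F p = colBase N F q := by
  simp only [colBase, h]

lemma add_le_of_mod_eq_of_lt {q p : ℕ} (h : q % N = p % N) (hlt : q < p) : q + N ≤ p := by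
  obtain ⟨t, ht⟩ := (Nat.modEq_iff_dvd' hlt.le).mp h
  rcases t with _ | t
  · omega
  · rw [Nat.mul_succ] at ht; omega

lemma IsColumnUpset.mem_iff_colBase_le (hF : IsColumnUpset N F) (p : ℕ) :
    p ∈ F ↔ colBase N F p ≤ p := by
  refine ⟨fun hp => colBase_le hp rfl, fun hle => ?_⟩
  induction p using Nat.strong_induction_on with
  | _ p ih =>
    obtain ⟨hmem, hmod⟩ := hF.colBase_spec p
    have hN := hF.pos
    rcases hle.eq_or_lt with heq | hlt
    · rwa [← heq]
    have hNp := add_le_of_mod_eq_of_lt hmod hlt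
    have hmod' : (p - N) % N = p % N := (Nat.mod_eq_sub_mod (by omega)).symm
    have := hF.add_mem _ (ih (p - N) (by omega) (by rw [colBase_congr hmod']; omega))
    rwa [Nat.sub_add_cancel (by omega)] at this

noncomputable def colBases (N : ℕ) (F : Set ℕ) : Finset ℕ := (range N).image (colBase N F)

lemma colBase_mem_colBases (hN : 0 < N) (p : ℕ) : colBase N F p ∈ colBases N F :=
  mem_image.mpr ⟨p % N, mem_range.mpr (Nat.mod_lt _ hN), colBase_congr (Nat.mod_mod _ _)⟩

lemma IsColumnUpset.colBase_eq_self (hF : IsColumnUpset N F) {v : ℕ}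
    (hv : v ∈ colBases N F) : colBase N F v = v := by
  obtain ⟨j, -, rfl⟩ := mem_image.mp hv
  exact colBase_congr (hF.colBase_spec j).2

def pourCells (N : ℕ) (F : Set ℕ) (c : ℕ) : Set ℕ :=
  {p | p ∈ F ∧ colBase N F p ∈ initSeg ↑(colBases N F) c}

lemma IsColumnUpset.count_le_count_pourCells (hF : IsColumnUpset N F) {S : Set ℕ}
    (hS : S.Finite) (hSF : S ⊆ F) {c : ℕ} (hc : (heads N S).ncard ≤ c) (m : ℕ) :
    Nat.count (· ∈ S) m ≤ Nat.count (· ∈ pourCells N F c) m := by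
  set J := hS.toFinset.image (colBase N F)
  set Sel := (colBases N F).filter (· ∈ initSeg ↑(colBases N F) c)
  have hJ : J ⊆ colBases N F := image_subset_iff.mpr fun p _ => colBase_mem_colBases hF.pos p
  have hJc : J.card ≤ c := by
    have := ncard_image_le_ncard_heads hF.pos hS (f := colBase N F)
      fun p hp => colBase_congr (Nat.mod_eq_sub_mod hp).symm
    rw [← Set.ncard_coe_finset, coe_image, Set.Finite.coe_toFinset]
    omega
  have hfiber : ∀ v ∈ Sel, {p ∈ range m | p ∈ pourCells N F c ∧ colBase N F p = v} =
      {p ∈ range m | v ≤ p ∧ p % N = v % N} := by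
    intro v hv
    obtain ⟨hvB, hvSel⟩ := mem_filter.mp hv
    have hvv := hF.colBase_eq_self hvB
    refine filter_congr fun p _ => ⟨fun ⟨hpF, hpv⟩ => ?_, fun ⟨hvp, hpv⟩ => ?_⟩
    · rw [← hpv]
      exact ⟨colBase_le hpF.1 rfl, (hF.colBase_spec p).2.symm⟩
    · have hbase : colBase N F p = v := (colBase_congr hpv).trans hvv
      exact ⟨⟨(hF.mem_iff_colBase_le p).mpr (hbase ▸ hvp), hbase ▸ hvSel⟩, hbase⟩
  calc Nat.count (· ∈ S) m = #{p ∈ range m | p ∈ S} := Nat.count_eq_card_filter_range _ _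
    _ = ∑ v ∈ J, #{p ∈ range m | p ∈ S ∧ colBase N F p = v} := by
        rw [card_eq_sum_card_fiberwise (f := colBase N F) (t := J)]
        · simp only [filter_filter]
        · intro p hp
          simp only [coe_filter, mem_range, Set.mem_ofPred_eq] at hp
          exact mem_image_of_mem _ (hS.mem_toFinset.mpr hp.2)
    _ ≤ ∑ v ∈ J, #{p ∈ range m | v ≤ p ∧ p % N = v % N} := by
        refine sum_le_sum fun v _ => card_le_card (monotone_filter_right _ ?_)
        intro p _ ⟨hpS, hpv⟩
        rw [← hpv]
        exact ⟨colBase_le (hSF hpS) rfl, (hF.colBase_spec p).2.symm⟩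
    _ ≤ ∑ v ∈ Sel, #{p ∈ range m | v ≤ p ∧ p % N = v % N} :=
        sum_le_sum_initSeg (antitone_card_column N m) hJ hJc
    _ = ∑ v ∈ Sel, #{p ∈ range m | p ∈ pourCells N F c ∧ colBase N F p = v} :=
        sum_congr rfl fun v hv => by rw [hfiber v hv]
    _ = #{p ∈ range m | p ∈ pourCells N F c} := by
        rw [card_eq_sum_card_fiberwise (f := colBase N F) (t := Sel)]
        · simp only [filter_filter]
        · intro p hp
          simp only [coe_filter, mem_range, Set.mem_ofPred_eq] at hp
          exact mem_filter.mpr ⟨colBase_mem_colBases hF.pos p, hp.2.2⟩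
    _ = Nat.count (· ∈ pourCells N F c) m := (Nat.count_eq_card_filter_range _ _).symm

variable {c d : ℕ}

lemma IsColumnUpset.add_mem_pourCells (hF : IsColumnUpset N F) {p : ℕ}
    (hp : p ∈ pourCells N F c) : p + N ∈ pourCells N F c :=
  ⟨hF.add_mem p hp.1, by rw [colBase_congr (Nat.add_mod_right p N)]; exact hp.2⟩

def pour (N : ℕ) (F : Set ℕ) (c d : ℕ) : Set ℕ := initSeg (pourCells N F c) d

lemma pour_subset : pour N F c d ⊆ F := fun _ hp => (initSeg_subset hp).1

lemma IsColumnUpset.staysUntilDone_pour (hF : IsColumnUpset N F) :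
    StaysUntilDone N (pour N F c d) := by
  intro p hp
  by_cases hpN : p + N ∈ pour N F c d
  · exact Or.inl hpN
  · exact Or.inr fun q hq =>
      lt_of_mem_initSeg hq (hF.add_mem_pourCells (initSeg_subset hp)) hpN

lemma IsColumnUpset.heads_pour_subset (hF : IsColumnUpset N F) :
    heads N (pour N F c d) ⊆ initSeg ↑(colBases N F) c := by
  rintro h ⟨hh, hhead⟩
  obtain ⟨hhF, hhSel⟩ := initSeg_subset hh
  suffices colBase N F h = h from this ▸ hhSel
  refine (colBase_le hhF rfl).antisymm (not_lt.mp fun hlt => ?_)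
  have hNh := add_le_of_mod_eq_of_lt (hF.colBase_spec h).2 hlt
  have hmod : (h - N) % N = h % N := (Nat.mod_eq_sub_mod (by omega)).symm
  have hprev : h - N ∈ pourCells N F c :=
    ⟨(hF.mem_iff_colBase_le _).mpr (by rw [colBase_congr hmod]; omega),
      by rwa [colBase_congr hmod]⟩
  have := mem_initSeg_of_lt hh hprev (by have := hF.pos; omega)
  rcases hhead with hh' | hh' <;> [omega; exact hh' this]

lemma IsColumnUpset.ncard_heads_pour_le (hF : IsColumnUpset N F) :
    (heads N (pour N F c d)).ncard ≤ c := by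
  refine (Set.ncard_le_ncard hF.heads_pour_subset
    ((colBases N F).finite_toSet.subset initSeg_subset)).trans ?_
  rw [Finset.ncard_initSeg]
  exact min_le_left _ _

lemma IsColumnUpset.lt_of_mem_heads_pour (hF : IsColumnUpset N F) {h e : ℕ}
    (hh : h ∈ heads N (pour N F c d)) (he : e ∈ F) (he' : e ∉ pour N F c d) : h < e := by
  by_cases heC : e ∈ pourCells N F c
  · exact lt_of_mem_initSeg hh.1 heC he'
  · exact (lt_of_mem_initSeg (hF.heads_pour_subset hh) (colBase_mem_colBases hF.pos e)
      fun h' => heC ⟨he, h'⟩).trans_le (colBase_le he rfl)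

lemma IsColumnUpset.lt_of_mem_pour (hF : IsColumnUpset N F)
    (hlt : (heads N (pour N F c d)).ncard < c) {p e : ℕ}
    (hp : p ∈ pour N F c d) (he : e ∈ F) (he' : e ∉ pour N F c d) : p < e := by
  by_cases heC : e ∈ pourCells N F c
  · exact lt_of_mem_initSeg hp heC he'
  set Sel := initSeg ↑(colBases N F) c
  have heSel : colBase N F e ∉ Sel := fun h' => heC ⟨he, h'⟩
  have hbase : ∀ v ∈ Sel, v ∈ pourCells N F c := fun v hv => by
    have hvv := hF.colBase_eq_self (initSeg_subset hv)
    exact ⟨hvv ▸ (hF.colBase_spec v).1, hvv.symm ▸ hv⟩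
  by_cases hfull : Sel ⊆ pour N F c d
  · exfalso
    have hSelHeads : Sel ⊆ heads N (pour N F c d) := fun v hv => ⟨hfull hv, by
      by_contra! h'
      have := colBase_le (pour_subset h'.2) (Nat.mod_eq_sub_mod h'.1).symm
      rw [hF.colBase_eq_self (initSeg_subset hv)] at this
      have := hF.pos
      omega⟩
    have hSelFin : Sel.Finite := (colBases N F).finite_toSet.subset initSeg_subset
    have hcard := (Set.ncard_le_ncard hSelHeads (hSelFin.subset hF.heads_pour_subset)).trans_lt hlt
    rw [Finset.ncard_initSeg] at hcard
    have hSelAll : Sel = colBases N F :=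
      Set.eq_of_subset_of_ncard_le initSeg_subset
        (by rw [Finset.ncard_initSeg, Set.ncard_coe_finset]; omega) (colBases N F).finite_toSet
    exact heSel (hSelAll ▸ colBase_mem_colBases hF.pos e)
  · obtain ⟨v, hvSel, hvp⟩ := Set.not_subset.mp hfull
    calc p < v := lt_of_mem_initSeg hp (hbase v hvSel) hvp
      _ < colBase N F e := lt_of_mem_initSeg hvSel (colBase_mem_colBases hF.pos e) heSel
      _ ≤ e := colBase_le he rfl

variable {S : Set ℕ}

lemma IsColumnUpset.count_le_count_pour (hF : IsColumnUpset N F) (hS : S.Finite) (hSF : S ⊆ F)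
    (hc : (heads N S).ncard ≤ c) (m : ℕ) :
    Nat.count (· ∈ S) m ≤ Nat.count (· ∈ pour N F c S.ncard) m := by
  rw [pour, count_initSeg]
  exact le_min (count_le_ncard hS m) (hF.count_le_count_pourCells hS hSF hc m)

lemma IsColumnUpset.pour_finite_and_ncard (hF : IsColumnUpset N F) (hS : S.Finite) (hSF : S ⊆ F)
    (hc : (heads N S).ncard ≤ c) :
    (pour N F c S.ncard).Finite ∧ (pour N F c S.ncard).ncard = S.ncard := by
  obtain ⟨n, hn⟩ := hS.bddAbove
  have hSn : S.ncard ≤ Nat.count (· ∈ pourCells N F c) (n + 1) := by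
    rw [ncard_eq_count_of_subset_Iio fun x hx => Nat.lt_succ_of_le (hn hx)]
    exact hF.count_le_count_pourCells hS hSF hc _
  exact ⟨(Set.finite_Iio _).subset (initSeg_subset_Iio hSn), ncard_initSeg hSn⟩

end Pour

/-! ### Gap-minimal belt assignments -/

variable {N T : ℕ} {d c : α → ℕ} {b : ℕ → Option α}

def slots (b : ℕ → Option α) (A : α) : Set ℕ := {i | b i = some A}

@[simp] lemma mem_slots {A : α} {i : ℕ} : i ∈ slots b A ↔ b i = some A :=
  Iff.rfl

lemma isBeltAssignment_iff :
    IsBeltAssignment N d c b ↔ ∀ A, IsBeltSlotSet N (d A) (c A) (slots b A) := by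
  constructor
  · rintro ⟨hfin, hcard, hstay, hmoulds⟩ A
    refine ⟨hfin A, hcard A, fun p hp => ?_, hmoulds A⟩
    rcases hstay p A hp with h | h
    · exact Or.inl h
    · exact Or.inr ((ncard_sep_lt_eq_iff (hfin A)).mp (h.trans (hcard A).symm))
  · intro h
    refine ⟨fun A => (h A).finite, fun A => (h A).ncard_eq, fun p A hp => ?_,
      fun A => (h A).ncard_heads_le⟩
    rcases (h A).staysUntilDone p hp with h' | h'
    · exact Or.inl h'
    · exact Or.inr (((ncard_sep_lt_eq_iff (h A).finite).mpr h').trans (h A).ncard_eq)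

lemma IsBeltAssignment.add_eq_some_or_eq_none (hb : IsBeltAssignment N d c b) {Z : α} {q : ℕ}
    (hq : b q = some Z) (hlast : ∀ W i, W ≠ Z → Injected N b W i → i ≤ q) {p : ℕ}
    (hp : b p = some Z) : b (p + N) = some Z ∨ b (p + N) = none := by
  rcases hpN : b (p + N) with _ | W
  · exact Or.inr rfl
  by_cases hWZ : W = Z
  · exact Or.inl (hWZ ▸ rfl)
  have hinj : Injected N b W (p + N) := ⟨hpN, Or.inr (by simp [hp, Ne.symm hWZ])⟩
  rcases (isBeltAssignment_iff.mp hb Z).staysUntilDone p hp with h | h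
  · exact absurd (hpN.symm.trans h) (by simpa using hWZ)
  · exact absurd (hlast W _ hWZ hinj) (not_le.mpr (h q hq))

noncomputable def relocate (b : ℕ → Option α) (Z : α) (P : Set ℕ) (i : ℕ) : Option α :=
  if i ∈ P then some Z else if b i = some Z then none else b i

section Relocate

variable {Z : α} {P : Set ℕ}

lemma slots_relocate_self : slots (relocate b Z P) Z = P := by
  ext i
  simp only [mem_slots, relocate]
  split_ifs <;> simp_all

lemma slots_relocate_of_ne (hP : ∀ i ∈ P, b i = none ∨ b i = some Z) {A : α} (hA : A ≠ Z) :
    slots (relocate b Z P) A = slots b A := by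
  ext i
  simp only [mem_slots, relocate]
  split_ifs with h1 h2
  · rcases hP i h1 with h | h <;> simp [h, hA.symm]
  · simp [h2, hA.symm]
  · rfl

lemma isBeltAssignment_relocate (hb : IsBeltAssignment N d c b)
    (hP : ∀ i ∈ P, b i = none ∨ b i = some Z) (hPZ : IsBeltSlotSet N (d Z) (c Z) P) :
    IsBeltAssignment N d c (relocate b Z P) := by
  refine isBeltAssignment_iff.mpr fun A => ?_
  by_cases hA : A = Z
  · subst hA
    rwa [slots_relocate_self]
  · rw [slots_relocate_of_ne hP hA]
    exact isBeltAssignment_iff.mp hb A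

end Relocate

noncomputable def gapWeight (T : ℕ) (x : ℕ → Option α) : ℕ :=
  ∑ m ∈ range (T + 1), Nat.count (fun i => x i = none) m

lemma gapWeight_relocate {Z : α} {P : Set ℕ} (hP : ∀ i ∈ P, b i = none ∨ b i = some Z) (T : ℕ) :
    gapWeight T (relocate b Z P) + ∑ m ∈ range (T + 1), Nat.count (· ∈ P) m =
      gapWeight T b + ∑ m ∈ range (T + 1), Nat.count (· ∈ slots b Z) m := by
  simp only [gapWeight, ← sum_add_distrib]
  refine sum_congr rfl fun m _ => Nat.count_add_count_eq (fun i => ?_) m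
  unfold relocate
  by_cases hi : i ∈ P
  · rcases hP i hi with h | h <;> simp [hi, h]
  · by_cases h : b i = some Z <;> simp [hi, h]

structure IsGapMinimal (N : ℕ) (d c : α → ℕ) (T : ℕ) (b : ℕ → Option α) : Prop where
  isBeltAssignment : IsBeltAssignment N d c b
  eq_none : ∀ i, T ≤ i → b i = none
  gapWeight_le : ∀ x, IsBeltAssignment N d c x → (∀ i, T ≤ i → x i = none) →
    gapWeight T b ≤ gapWeight T x

namespace IsGapMinimal

lemma lt_of_eq_some (hb : IsGapMinimal N d c T b) {i : ℕ} {A : α} (h : b i = some A) : i < T :=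
  not_le.mp fun hi => by simp [hb.eq_none i hi] at h

lemma eq_of_count_le (hb : IsGapMinimal N d c T b) {Z : α} {P : Set ℕ}
    (hPZ : IsBeltSlotSet N (d Z) (c Z) P) (hP : ∀ i ∈ P, b i = none ∨ b i = some Z)
    (hdom : ∀ m, Nat.count (· ∈ slots b Z) m ≤ Nat.count (· ∈ P) m) :
    P = slots b Z := by
  have hS := (isBeltAssignment_iff.mp hb.isBeltAssignment Z)
  have hST : slots b Z ⊆ Set.Iio T := fun i hi => hb.lt_of_eq_some hi
  have hPT : P ⊆ Set.Iio T := subset_Iio_of_ncard_le_count hPZ.finite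
    (by rw [hPZ.ncard_eq, ← hS.ncard_eq, ncard_eq_count_of_subset_Iio hST]; exact hdom T)
  have hrel := hb.gapWeight_le _ (isBeltAssignment_relocate hb.isBeltAssignment hP hPZ)
    fun i hi => by
      have hiP : i ∉ P := fun h => (hPT h).not_ge hi
      simp [relocate, hiP, hb.eq_none i hi]
  have hsum := gapWeight_relocate hP T
  have hcount := (sum_eq_sum_iff_of_le fun m (_ : m ∈ range (T + 1)) => hdom m).mp
    (le_antisymm (sum_le_sum fun m _ => hdom m) (by omega))
  refine Set.eq_of_count_eq fun m => ?_
  by_cases hm : m ≤ T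
  · exact (hcount m (mem_range.mpr (Nat.lt_succ_of_le hm))).symm
  · rw [← ncard_eq_count_of_subset_Iio (hPT.trans (Set.Iio_subset_Iio (by omega))),
      ← ncard_eq_count_of_subset_Iio (hST.trans (Set.Iio_subset_Iio (by omega))),
      hPZ.ncard_eq, hS.ncard_eq]

lemma eq_none_add (hb : IsGapMinimal N d c T b) (hN : 0 < N) {e : ℕ}
    (he : b e = none) : b (e + N) = none := by
  by_contra h
  obtain ⟨C, hC⟩ := Option.ne_none_iff_exists'.mp h
  have hS := isBeltAssignment_iff.mp hb.isBeltAssignment C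
  have hbdd := hS.finite.bddAbove
  have hM : sSup (slots b C) ∈ slots b C := Nat.sSup_mem ⟨_, hC⟩ hbdd
  have hle : ∀ q ∈ slots b C, q ≤ sSup (slots b C) := fun q hq => le_csSup hbdd hq
  have heS : e ∉ slots b C := by simp [he]
  have heq := hb.eq_of_count_le (isBeltSlotSet_insert_diff_max hN hS heS hC hM hle)
    (by rintro i (rfl | ⟨hi, -⟩) <;> simp_all)
    fun m => by convert count_le_count_insert_diff heS hM (by have := hle _ hC; omega) m
  exact heS (heq ▸ Set.mem_insert e _)

lemma isColumnUpset (hb : IsGapMinimal N d c T b) (hN : 0 < N) {Z : α}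
    (htop : ∀ p, b p = some Z → b (p + N) = some Z ∨ b (p + N) = none) :
    IsColumnUpset N {p | b p = none ∨ b p = some Z} where
  pos := hN
  add_mem p hp := by
    rcases hp with hp | hp
    · exact Or.inl (hb.eq_none_add hN hp)
    · exact (htop p hp).symm
  eventually_mem := ⟨T, fun p hp => Or.inl (hb.eq_none p hp)⟩

lemma pour_eq_slots (hb : IsGapMinimal N d c T b) (hN : 0 < N) {Z : α}
    (htop : ∀ p, b p = some Z → b (p + N) = some Z ∨ b (p + N) = none) :
    pour N {p | b p = none ∨ b p = some Z} (c Z) (slots b Z).ncard = slots b Z := by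
  have hF := hb.isColumnUpset hN htop
  have hS := isBeltAssignment_iff.mp hb.isBeltAssignment Z
  have hSF : slots b Z ⊆ {p | b p = none ∨ b p = some Z} := fun p hp => Or.inr hp
  obtain ⟨hfin, hcard⟩ := hF.pour_finite_and_ncard hS.finite hSF hS.ncard_heads_le
  exact hb.eq_of_count_le ⟨hfin, hcard.trans hS.ncard_eq, hF.staysUntilDone_pour,
    hF.ncard_heads_pour_le⟩ (fun p hp => pour_subset hp)
    (hF.count_le_count_pour hS.finite hSF hS.ncard_heads_le)

lemma propE (hb : IsGapMinimal N d c T b) (hN : 0 < N) : PropE N b := by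
  intro A i e hi he
  set I := {p | ∃ W, Injected N b W p}
  have hIfin : I.Finite := (Set.finite_Iio T).subset fun p ⟨W, hW⟩ => hb.lt_of_eq_some hW.1
  obtain ⟨Z, hZ⟩ : sSup I ∈ I := Nat.sSup_mem ⟨i, A, hi⟩ hIfin.bddAbove
  have hle : ∀ p ∈ I, p ≤ sSup I := fun p hp => le_csSup hIfin.bddAbove hp
  have htop : ∀ p, b p = some Z → b (p + N) = some Z ∨ b (p + N) = none := fun p =>
    hb.isBeltAssignment.add_eq_some_or_eq_none hZ.1 fun W i _ hi => hle i ⟨W, hi⟩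
  have heq := hb.pour_eq_slots hN htop
  have := (hb.isColumnUpset hN htop).lt_of_mem_heads_pour (d := (slots b Z).ncard)
    (by rw [heq]; exact hZ) (Or.inl he) (by rw [heq]; simp [he])
  exact (hle i ⟨A, hi⟩).trans_lt this

lemma propF (hb : IsGapMinimal N d c T b) (hN : 0 < N) : PropF N c b := by
  intro e A he hlt i hei hi
  have htop : ∀ p, b p = some A → b (p + N) = some A ∨ b (p + N) = none := fun p =>
    hb.isBeltAssignment.add_eq_some_or_eq_none hi fun W i' _ hi' =>
      ((hb.propE hN W i' e hi' he).trans_le hei).le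
  have heq := hb.pour_eq_slots hN htop
  have := (hb.isColumnUpset hN htop).lt_of_mem_pour (d := (slots b A).ncard)
    (by rw [heq]; exact hlt) (heq.symm ▸ mem_slots.mpr hi) (Or.inl he) (by rw [heq]; simp [he])
  omega

end IsGapMinimal

lemma IsBeltAssignment.makespan_le (hb : IsBeltAssignment N d c b) {s : ℕ}
    (h : ∀ i A, b i = some A → i < s - N) : Makespan N d b ≤ s :=
  Nat.sInf_le fun A => ((ncard_sep_lt_eq_iff (isBeltAssignment_iff.mp hb A).finite).mpr
    (fun i hi => h i A hi)).trans (isBeltAssignment_iff.mp hb A).ncard_eq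

lemma IsBeltAssignment.lt_makespan_sub [Finite α] (hb : IsBeltAssignment N d c b) {i : ℕ}
    {A : α} (h : b i = some A) : i < Makespan N d b - N := by
  have hS := isBeltAssignment_iff.mp hb
  obtain ⟨n, hn⟩ := (Set.finite_iUnion fun A => (hS A).finite).bddAbove
  have hne : {s | ∀ A : α, {j | b j = some A ∧ j < s - N}.ncard = d A}.Nonempty :=
    ⟨n + 1 + N, fun A => ((ncard_sep_lt_eq_iff (hS A).finite).mpr fun q hq =>
      by have := hn (Set.mem_iUnion.mpr ⟨A, hq⟩); omega).trans (hS A).ncard_eq⟩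
  exact (ncard_sep_lt_eq_iff (hS A).finite).mp (((Nat.sInf_mem hne) A).trans (hS A).ncard_eq.symm)
    i h

theorem exists_propE_propF_of_finite [Finite α] (hN : 0 < N) (hb : IsBeltAssignment N d c b) :
    ∃ b', IsBeltAssignment N d c b' ∧ Makespan N d b' ≤ Makespan N d b ∧ PropE N b' ∧
      PropF N c b' := by
  set T := Makespan N d b - N
  have hbT : ∀ i, T ≤ i → b i = none := fun i hi => by
    by_contra h
    obtain ⟨A, hA⟩ := Option.ne_none_iff_exists'.mp h
    exact (hb.lt_makespan_sub hA).not_ge hi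
  obtain ⟨x, ⟨hx, hxT⟩, hmin⟩ := exists_minimalFor_of_wellFoundedLT
    (fun x => IsBeltAssignment N d c x ∧ ∀ i, T ≤ i → x i = none) (gapWeight T) ⟨b, hb, hbT⟩
  have hgm : IsGapMinimal N d c T x :=
    ⟨hx, hxT, fun y hy hyT => le_of_not_gt fun hlt => hlt.not_ge (hmin ⟨hy, hyT⟩ hlt.le)⟩
  exact ⟨x, hx, hx.makespan_le fun i A h => hgm.lt_of_eq_some h, hgm.propE hN, hgm.propF hN⟩

/-! ### Infinitely many types -/

lemma isBeltSlotSet_run (hN : 0 < N) (p n : ℕ) {m : ℕ} (hm : 0 < m) :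
    IsBeltSlotSet N n m ↑((range n).image fun t => p + t * N) := by
  have hinj : Function.Injective fun t => p + t * N := fun s t h => by
    simpa [hN.ne'] using h
  refine ⟨finite_toSet _, by rw [Set.ncard_coe_finset, card_image_of_injective _ hinj, card_range],
    ?_, ?_⟩
  · rintro _ hq
    obtain ⟨t, ht, rfl⟩ := mem_image.mp hq
    by_cases htd : t + 1 < n
    · exact Or.inl (mem_image.mpr ⟨t + 1, mem_range.mpr htd, by ring⟩)
    · refine Or.inr fun _ hs => ?_
      obtain ⟨s, hs, rfl⟩ := mem_image.mp hs
      have : s * N ≤ t * N := Nat.mul_le_mul_right N (by simp at ht hs; omega)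
      omega
  · refine (Set.ncard_le_ncard (t := {p}) ?_).trans (by rw [Set.ncard_singleton]; exact hm)
    rintro _ ⟨hq, hhead⟩
    obtain ⟨t, -, rfl⟩ := mem_image.mp hq
    rcases t with _ | t
    · simp
    · exfalso
      have hprev : p + (t + 1) * N - N = p + t * N := by rw [add_mul, one_mul]; omega
      rcases hhead with h | h
      · rw [add_mul] at h; omega
      · exact h (hprev ▸ mem_image.mpr ⟨t, mem_range.mpr (by simp at *; omega), rfl⟩)

noncomputable def blockIdx (ℓ : ℕ → ℕ) (r : ℕ) : ℕ := sInf {k | r < ∑ t ∈ range (k + 1), ℓ t}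

lemma blockIdx_eq_iff {ℓ : ℕ → ℕ} (hℓ : ∀ t, 0 < ℓ t) {r k : ℕ} :
    blockIdx ℓ r = k ↔ ∑ t ∈ range k, ℓ t ≤ r ∧ r < ∑ t ∈ range (k + 1), ℓ t := by
  have hmono : Monotone fun k => ∑ t ∈ range k, ℓ t := fun a b h =>
    sum_le_sum_of_subset (range_mono h)
  have hne : {k | r < ∑ t ∈ range (k + 1), ℓ t}.Nonempty := by
    refine ⟨r, ?_⟩
    have := card_nsmul_le_sum (range (r + 1)) ℓ 1 fun t _ => hℓ t
    simp only [card_range, smul_eq_mul, mul_one] at this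
    exact this
  have hspec : r < ∑ t ∈ range (blockIdx ℓ r + 1), ℓ t := Nat.sInf_mem hne
  have hlow : ∑ t ∈ range (blockIdx ℓ r), ℓ t ≤ r := by
    rcases hK : blockIdx ℓ r with _ | K
    · simp
    · have : K ∉ {k | r < ∑ t ∈ range (k + 1), ℓ t} :=
        Nat.notMem_of_lt_sInf (show K < blockIdx ℓ r by omega)
      exact not_lt.mp this
  constructor
  · rintro rfl
    exact ⟨hlow, hspec⟩
  · rintro ⟨h1, h2⟩
    refine le_antisymm (Nat.sInf_le h2) (not_lt.mp fun hlt => ?_)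
    have := hmono (show blockIdx ℓ r + 1 ≤ k by omega)
    simp only at this
    omega

-- The type with index `j + k * N`, `j < N`, fills the `k`-th block of column `j`, the blocks of
-- column `j` having the demands of its types as lengths.
noncomputable def gaplessBelt (N : ℕ) (d : α → ℕ) (e : α ≃ ℕ) (i : ℕ) : Option α :=
  some (e.symm (i % N + blockIdx (fun t => d (e.symm (i % N + t * N))) (i / N) * N))

lemma slots_gaplessBelt (hN : 0 < N) (hd : ∀ A, 0 < d A) (e : α ≃ ℕ) (A : α) :
    slots (gaplessBelt N d e) A = ↑((range (d A)).image fun t =>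
      e A % N + (∑ s ∈ range (e A / N), d (e.symm (e A % N + s * N))) * N + t * N) := by
  set j := e A % N
  set k := e A / N
  set ℓ := fun t => d (e.symm (j + t * N))
  have hjN : j < N := Nat.mod_lt _ hN
  have hjk : j + k * N = e A := Nat.mod_add_div' _ _
  have hℓ : ∀ t, 0 < ℓ t := fun t => hd _
  have hblock : ∑ t ∈ range (k + 1), ℓ t = ∑ t ∈ range k, ℓ t + d A := by
    rw [sum_range_succ]
    simp [ℓ, hjk]
  ext i
  simp only [mem_slots, gaplessBelt, Option.some_inj, Equiv.symm_apply_eq, coe_image,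
    coe_range, Set.mem_image, Set.mem_Iio]
  constructor
  · intro h
    have hij : i % N = j := by
      have := congrArg (· % N) h
      simpa [Nat.add_mul_mod_self_right, Nat.mod_mod] using this
    have hK : blockIdx (fun t => d (e.symm (i % N + t * N))) (i / N) = k := by
      have := congrArg (· / N) h
      simpa [Nat.add_mul_div_right _ _ hN, Nat.div_eq_of_lt (Nat.mod_lt i hN)] using this
    rw [hij] at hK
    obtain ⟨h1, h2⟩ := (blockIdx_eq_iff hℓ).mp hK
    refine ⟨i / N - ∑ t ∈ range k, ℓ t, by omega, ?_⟩
    have := Nat.mod_add_div' i N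
    rw [add_assoc, ← add_mul, Nat.add_sub_cancel' h1, ← hij]
    exact this
  · rintro ⟨t, ht, rfl⟩
    have hrow : j + (∑ s ∈ range k, ℓ s) * N + t * N = j + (∑ s ∈ range k, ℓ s + t) * N := by
      ring
    rw [hrow, Nat.add_mul_mod_self_right, Nat.mod_eq_of_lt hjN, Nat.add_mul_div_right _ _ hN,
      Nat.div_eq_of_lt hjN, zero_add, ← hjk]
    congr 2
    exact (blockIdx_eq_iff hℓ).mpr ⟨by omega, by omega⟩

lemma makespan_eq_zero_of_infinite [Infinite α] (hd : ∀ A, 0 < d A) (x : ℕ → Option α) :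
    Makespan N d x = 0 := by
  refine Nat.sInf_eq_zero.mpr (Or.inr (Set.eq_empty_of_forall_notMem fun s hs => ?_))
  choose f hf using fun A => Set.nonempty_of_ncard_ne_zero ((hs A).trans_ne (hd A).ne')
  have : Finite α := Finite.of_injective (fun A => (⟨f A, (hf A).2⟩ : Set.Iio (s - N)))
    fun A B h => Option.some_injective _
      (((hf A).1.symm.trans (congrArg (x ∘ Subtype.val) h)).trans (hf B).1)
  exact not_finite α

theorem exists_propE_propF_of_infinite [Infinite α] (hN : 0 < N) (hd : ∀ A, 0 < d A)
    (hc : ∀ A, 0 < c A) {b : ℕ → Option α} (hb : IsBeltAssignment N d c b) :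
    ∃ b', IsBeltAssignment N d c b' ∧ Makespan N d b' ≤ Makespan N d b ∧ PropE N b' ∧
      PropF N c b' := by
  have hslot : ∀ A, (slots b A).Nonempty := fun A => Set.nonempty_of_ncard_ne_zero
    (((isBeltAssignment_iff.mp hb A).ncard_eq).trans_ne (hd A).ne')
  choose f hf using hslot
  have : Countable α := Function.Injective.countable (f := f) fun A B h =>
    Option.some_injective _ ((hf A).symm.trans (h ▸ hf B))
  obtain ⟨_⟩ := nonempty_denumerable α
  set e := Denumerable.eqv α
  refine ⟨gaplessBelt N d e, isBeltAssignment_iff.mpr fun A => ?_,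
    (makespan_eq_zero_of_infinite hd _).trans_le (Nat.zero_le _),
    fun _ _ _ _ h => by simp [gaplessBelt] at h, fun _ _ h => by simp [gaplessBelt] at h⟩
  rw [slots_gaplessBelt hN hd]
  exact isBeltSlotSet_run hN _ _ (hc A)

end

/-- **Observation 4.** For every belt assignment `b` there is a belt
assignment `b'` with makespan at most that of `b` satisfying both
Property (E) and Property (F). -/
theorem statement5 (N : ℕ) (hN : 0 < N)
    (d c : α → ℕ) (hd : ∀ A, 0 < d A) (hc : ∀ A, 0 < c A)
    (b : ℕ → Option α) (hb : IsBeltAssignment N d c b) :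
    ∃ b' : ℕ → Option α, IsBeltAssignment N d c b' ∧
      Makespan N d b' ≤ Makespan N d b ∧ PropE N b' ∧ PropF N c b' := by
  rcases finite_or_infinite α with _ | _
  · exact exists_propE_propF_of_finite hN hb
  · exact exists_propE_propF_of_infinite hN hd hc hb
end

section
/- Empty slots stay empty: if a belt assignment b satisfies Property (E) and b(e) = ⊔ for some non-negative integer e, then b(e + ℓ·N) = ⊔ for every non-negative integer ℓ. -/
open Finset

variable {α : Type*}

/-- Empty slots stay empty: in a belt assignment satisfying Property (E),
if `b e = ⊔` then `b (e + ℓ·N) = ⊔` for every `ℓ ≥ 0`. -/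
theorem statement6 (N : ℕ) (hN : 0 < N)
    (d c : α → ℕ) (hd : ∀ A, 0 < d A) (hc : ∀ A, 0 < c A)
    (b : ℕ → Option α) (hb : IsBeltAssignment N d c b) (hE : PropE N b)
    (e : ℕ) (he : b e = none) :
    ∀ ℓ : ℕ, b (e + ℓ * N) = none := by
  intro ℓ
  induction ℓ with
  | zero => simpa using he
  | succ k ih =>
    by_contra h
    obtain ⟨A, hA⟩ := Option.ne_none_iff_exists'.mp h
    have hinj : Injected N b A (e + (k + 1) * N) := by
      refine ⟨hA, Or.inr ?_⟩
      have : e + (k + 1) * N - N = e + k * N := by ring_nf; omega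
      rw [this, ih]
      simp
    have := hE A (e + (k + 1) * N) e hinj he
    omega
end

section
/- A belt assignment b satisfies Property (E) and Property (F) if and only if there is an injection sequence s whose corresponding belt function equals b. -/
open Finset

variable {α : Type*}

section CorrespondingBelt

variable [Fintype α] [DecidableEq α]

/-- One step of the greedy construction of the belt function corresponding to
an injection sequence. `pre` is the list of slots assigned so far (slot `i`
for `i < pre.length`), `rem` is the not-yet-used tail of the injection
sequence (the pointer position). If the total demand is met, the slot stays
empty. Otherwise, if the slot `N` steps earlier carries a type whose demand
is not yet met, that type stays in the slot. Otherwise the pointer is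
advanced past all moulds whose type's demand is already met and, if a mould
remains, it is injected; else the slot stays empty. -/
def beltStep (N : ℕ) (d : α → ℕ) (pre : List (Option α)) (rem : List α) :
    Option α × List α :=
  if pre.reduceOption.length = ∑ A : α, d A then (none, rem)
  else if N ≤ pre.length ∧
      ∃ A : α, pre.getD (pre.length - N) none = some A ∧ pre.count (some A) < d A then
    (pre.getD (pre.length - N) none, rem)
  else
    match rem.dropWhile (fun A => decide (d A ≤ pre.count (some A))) with
    | [] => (none, [])
    | A :: t => (some A, t)

/-- The state (assigned slots, remaining injection sequence) after `i` steps
of the greedy construction. -/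
def beltState (N : ℕ) (d : α → ℕ) (s : List α) : ℕ → List (Option α) × List α
  | 0 => ([], s)
  | i + 1 =>
      let p := beltState N d s i
      let q := beltStep N d p.1 p.2
      (p.1 ++ [q.1], q.2)

/-- The belt function corresponding to the injection sequence `s`. -/
def corrBelt (N : ℕ) (d : α → ℕ) (s : List α) (i : ℕ) : Option α :=
  (beltState N d s (i + 1)).1.getD i none

end CorrespondingBelt

/-!
In the belt function built greedily from an injection sequence `s`, every slot is empty because
the total demand is met, or repeats the mould of `N` steps earlier, or receives the next mould of
`s` whose type still has open demand (`corrBelt_step`). An empty slot of the third kind means that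
the pointer has run past the end of `s`: no injection happens afterwards, which is Property (E),
and every type of which a mould is left unused has its demand met already, so it never appears
again, which is Property (F).

Conversely, given (E) and (F), let `s` list the injected moulds of `b` in order of injection,
followed by the `c A - MouldsUsed A` unused moulds of each type `A`. The greedy construction then
reproduces `b` slot by slot, with the pointer always at the first mould not yet injected: at the
first empty slot not forced by the total demand, (E) says that all injections are done, and (F)
that all unused moulds are of types whose demand is met, so the pointer skips past them all.
-/

theorem Nat.count_eq_ncard (p : ℕ → Prop) [DecidablePred p] (i : ℕ) :
    Nat.count p i = {j | p j ∧ j < i}.ncard := by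
  rw [Nat.count_eq_card_filter_range, ← Set.ncard_coe_finset]
  congr 1
  ext j
  simp [and_comm]

theorem List.length_reduceOption_eq_sum_count [Fintype α] [DecidableEq α] (l : List (Option α)) :
    l.reduceOption.length = ∑ A, l.count (some A) := by
  have h := Multiset.sum_count_eq_card (s := univ) (m := (l.reduceOption : Multiset α))
    (fun a _ => mem_univ a)
  simp only [Multiset.coe_count, Multiset.coe_card] at h
  rw [← h]
  refine Finset.sum_congr rfl fun A _ => ?_
  rw [List.reduceOption, List.count_filterMap]
  rfl

theorem List.count_dropWhile_of_not {β : Type*} [BEq β] [LawfulBEq β] (p : β → Bool) (l : List β)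
    {a : β} (ha : p a = false) : (l.dropWhile p).count a = l.count a := by
  induction l with
  | nil => rfl
  | cons x l ih =>
    rw [List.dropWhile_cons]
    split_ifs with hx
    · rw [ih, List.count_cons, if_neg (by rintro h; simp_all)]
      rfl
    · rfl

section Counting

variable [DecidableEq α]

def countBefore (f : ℕ → Option α) (A : α) (i : ℕ) : ℕ :=
  Nat.count (fun j => f j = some A) i

theorem count_map_range (f : ℕ → Option α) (A : α) (i : ℕ) :
    ((List.range i).map f).count (some A) = countBefore f A i := by
  simp only [countBefore, Nat.count, List.count, List.countP_map]
  congr 1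
  funext j
  exact beq_eq_decide (f j) (some A)

theorem countBefore_congr {f g : ℕ → Option α} {i : ℕ} (h : ∀ j < i, f j = g j) (A : α) :
    countBefore f A i = countBefore g A i := by
  rw [← count_map_range, ← count_map_range,
    List.map_congr_left fun j hj => h j (List.mem_range.mp hj)]

instance (N : ℕ) (b : ℕ → Option α) (A : α) : DecidablePred (Injected N b A) :=
  fun _ => by unfold Injected; infer_instance

theorem count_injected_le_mouldsUsed {N : ℕ} {b : ℕ → Option α} {A : α}
    (hfin : {j | b j = some A}.Finite) (i : ℕ) :
    Nat.count (Injected N b A) i ≤ MouldsUsed N b A := by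
  rw [Nat.count_eq_ncard]
  exact Set.ncard_le_ncard (fun j hj => hj.1) (hfin.subset fun j hj => hj.1)

end Counting

section Demand

variable [DecidableEq α] (N : ℕ) (d : α → ℕ) (f : ℕ → Option α) (i : ℕ)

def TotalDemandMet [Fintype α] : Prop :=
  ∑ A, countBefore f A i = ∑ A, d A

def IsCarried : Prop :=
  N ≤ i ∧ ∃ A, f (i - N) = some A ∧ countBefore f A i < d A

def skipMet (rem : List α) : List α :=
  rem.dropWhile fun A => d A ≤ countBefore f A i

instance [Fintype α] : Decidable (TotalDemandMet d f i) := inferInstanceAs (Decidable (_ = _))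

instance [Fintype α] : Decidable (IsCarried N d f i) := inferInstanceAs (Decidable (_ ∧ _))

def RespectsDemand : Prop :=
  ∀ j A, f j = some A → countBefore f A j < d A

end Demand

theorem beltStep_map_range [Fintype α] [DecidableEq α] {N : ℕ} (hN : 0 < N) (d : α → ℕ)
    (f : ℕ → Option α) (i : ℕ) (rem : List α) :
    beltStep N d ((List.range i).map f) rem =
      if TotalDemandMet d f i then (none, rem)
      else if IsCarried N d f i then (f (i - N), rem)
      else ((skipMet d f i rem).head?, (skipMet d f i rem).tail) := by
  have hget : N ≤ i → ((List.range i).map f).getD (i - N) none = f (i - N) := fun hNi => by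
    rw [List.getD_eq_getElem?_getD, List.getElem?_map, List.getElem?_range (by omega)]
    rfl
  unfold beltStep skipMet TotalDemandMet IsCarried
  simp only [List.length_reduceOption_eq_sum_count, count_map_range, List.length_map,
    List.length_range]
  by_cases hNi : N ≤ i <;> simp only [hget, hNi, true_and, false_and, if_false] <;>
    split_ifs <;> try rfl
  all_goals
    generalize List.dropWhile _ rem = l
    cases l <;> rfl

section Demand

variable [DecidableEq α] {N : ℕ} {d : α → ℕ} {f : ℕ → Option α}

theorem RespectsDemand.countBefore_le (hf : RespectsDemand d f) (A : α) (i : ℕ) :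
    countBefore f A i ≤ d A := by
  induction i with
  | zero => simp [countBefore]
  | succ i ih =>
    rw [countBefore, Nat.count_succ]
    split_ifs with h
    · exact hf i A h
    · exact ih

theorem RespectsDemand.ne_some_of_countBefore_eq (hf : RespectsDemand d f) {A : α} {i j : ℕ}
    (hA : countBefore f A i = d A) (hij : i ≤ j) : f j ≠ some A := fun hj =>
  (hf j A hj).not_ge (hA ▸ Nat.count_monotone _ hij)

theorem RespectsDemand.eq_none_of_totalDemandMet [Fintype α] (hf : RespectsDemand d f)
    {i j : ℕ} (h : TotalDemandMet d f i) (hij : i ≤ j) : f j = none := by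
  have hmet := (Finset.sum_eq_sum_iff_of_le fun A _ => hf.countBefore_le A i).mp h
  exact Option.eq_none_iff_forall_ne_some.mpr fun A =>
    hf.ne_some_of_countBefore_eq (hmet A (mem_univ A)) hij

theorem RespectsDemand.injected_iff (hf : RespectsDemand d f) {i : ℕ}
    (hi : ¬ IsCarried N d f i) {A : α} : Injected N f A i ↔ f i = some A := by
  refine ⟨And.left, fun h => ⟨h, ?_⟩⟩
  by_contra! hcon
  exact hi ⟨hcon.1, A, hcon.2, hf i A h⟩

theorem not_injected_of_isCarried {i : ℕ} (hi : IsCarried N d f i) (hf : f i = f (i - N))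
    (A : α) : ¬ Injected N f A i := by
  rintro ⟨hA, hi' | hi'⟩
  · exact absurd hi.1 (not_le.mpr hi')
  · exact hi' (hf ▸ hA)

theorem countBefore_lt_of_head?_skipMet_eq_some {i : ℕ} {rem : List α} {A : α}
    (h : (skipMet d f i rem).head? = some A) : countBefore f A i < d A := by
  have := List.head?_dropWhile_not (fun A => decide (d A ≤ countBefore f A i)) rem
  rw [skipMet] at h
  rw [h] at this
  simpa using this

theorem count_skipMet {i : ℕ} {A : α} (hA : countBefore f A i < d A) (rem : List α) :
    (skipMet d f i rem).count A = rem.count A :=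
  List.count_dropWhile_of_not _ rem (by simpa using hA)

end Demand

section BeltState

variable [Fintype α] [DecidableEq α] {N : ℕ} {d : α → ℕ} {s : List α}

theorem beltState_fst (i : ℕ) :
    (beltState N d s i).1 = (List.range i).map (corrBelt N d s) := by
  induction i with
  | zero => rfl
  | succ i ih =>
    have hi : corrBelt N d s i = (beltStep N d (beltState N d s i).1 (beltState N d s i).2).1 := by
      rw [corrBelt, beltState, List.getD_eq_getElem?_getD, ih]
      simp
    simp only [beltState, ih, List.range_succ, List.map_append, List.map_cons, List.map_nil, hi]

theorem corrBelt_step (hN : 0 < N) {f : ℕ → Option α} {i : ℕ}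
    (hf : ∀ j < i, corrBelt N d s j = f j) :
    (corrBelt N d s i, (beltState N d s (i + 1)).2) =
      if TotalDemandMet d f i then (none, (beltState N d s i).2)
      else if IsCarried N d f i then (f (i - N), (beltState N d s i).2)
      else ((skipMet d f i (beltState N d s i).2).head?,
        (skipMet d f i (beltState N d s i).2).tail) := by
  rw [← beltStep_map_range hN, ← List.map_congr_left fun j hj => hf j (List.mem_range.mp hj),
    ← beltState_fst, corrBelt, beltState]
  simp [beltState_fst]

end BeltState

section CorrespondingBelt

variable [Fintype α] [DecidableEq α] {N : ℕ} {d : α → ℕ} {s : List α}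

theorem corrBelt_step_self (hN : 0 < N) (i : ℕ) :
    (corrBelt N d s i, (beltState N d s (i + 1)).2) =
      if TotalDemandMet d (corrBelt N d s) i then (none, (beltState N d s i).2)
      else if IsCarried N d (corrBelt N d s) i then
        (corrBelt N d s (i - N), (beltState N d s i).2)
      else ((skipMet d (corrBelt N d s) i (beltState N d s i).2).head?,
        (skipMet d (corrBelt N d s) i (beltState N d s i).2).tail) :=
  corrBelt_step hN fun _ _ => rfl

theorem respectsDemand_corrBelt (hN : 0 < N) : RespectsDemand d (corrBelt N d s) := by
  intro i A hA
  have hstep := corrBelt_step_self (d := d) (s := s) hN i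
  split_ifs at hstep with htot hcar <;> simp only [Prod.mk.injEq] at hstep <;> rw [hA] at hstep
  · simp at hstep
  · obtain ⟨-, B, hB, hlt⟩ := hcar
    obtain rfl : A = B := Option.some_inj.mp (hstep.1.trans hB)
    exact hlt
  · exact countBefore_lt_of_head?_skipMet_eq_some hstep.1.symm

theorem beltState_snd_eq_nil_of_le (hN : 0 < N) {i j : ℕ} (hij : i ≤ j)
    (h : (beltState N d s i).2 = []) : (beltState N d s j).2 = [] := by
  induction j, hij using Nat.le_induction with
  | base => exact h
  | succ j _ ih =>
    have hstep := corrBelt_step_self (d := d) (s := s) hN j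
    split_ifs at hstep <;> simp only [Prod.mk.injEq] at hstep <;> rw [hstep.2, ih]
    rfl

theorem beltState_snd_ne_nil_of_injected (hN : 0 < N) {i : ℕ} {A : α}
    (h : Injected N (corrBelt N d s) A i) : (beltState N d s i).2 ≠ [] := by
  intro hnil
  have hstep := corrBelt_step_self (d := d) (s := s) hN i
  split_ifs at hstep with htot hcar <;> simp only [Prod.mk.injEq] at hstep
  · simp [hstep.1, Injected] at h
  · exact not_injected_of_isCarried hcar hstep.1 A h
  · rw [hnil] at hstep
    simp [hstep.1, Injected, skipMet] at h

theorem totalDemandMet_or_beltState_snd_eq_nil (hN : 0 < N) {e : ℕ}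
    (he : corrBelt N d s e = none) :
    TotalDemandMet d (corrBelt N d s) e ∨ (beltState N d s (e + 1)).2 = [] := by
  have hstep := corrBelt_step_self (d := d) (s := s) hN e
  split_ifs at hstep with htot hcar <;> simp only [Prod.mk.injEq] at hstep
  · exact Or.inl htot
  · obtain ⟨-, A, hA, -⟩ := hcar
    simp [← hstep.1, he] at hA
  · rw [he, eq_comm, List.head?_eq_none_iff] at hstep
    rw [hstep.2, hstep.1, List.tail_nil]
    exact Or.inr rfl

theorem propE_corrBelt (hN : 0 < N) : PropE N (corrBelt N d s) := by
  intro A i e hi he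
  by_contra! hei
  rcases totalDemandMet_or_beltState_snd_eq_nil hN he with htot | hnil
  · have := (respectsDemand_corrBelt hN).eq_none_of_totalDemandMet htot hei
    simp [hi.1] at this
  · rcases hei.eq_or_lt with rfl | hlt
    · simp [hi.1] at he
    · exact beltState_snd_ne_nil_of_injected hN hi (beltState_snd_eq_nil_of_le hN hlt hnil)

-- While `A` has open demand the pointer never skips a copy of `A`: each one is injected or ahead.
theorem count_eq_count_injected_add_count_beltState_snd (hN : 0 < N) {A : α} {i : ℕ}
    (hA : countBefore (corrBelt N d s) A i < d A) :
    s.count A = Nat.count (Injected N (corrBelt N d s) A) i + (beltState N d s i).2.count A := by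
  induction i with
  | zero => simp [beltState]
  | succ i ih =>
    have hAi : countBefore (corrBelt N d s) A i < d A :=
      lt_of_le_of_lt (Nat.count_monotone _ i.le_succ) hA
    rw [ih hAi, Nat.count_succ, add_assoc]
    congr 1
    have hstep := corrBelt_step_self (d := d) (s := s) hN i
    split_ifs at hstep with htot hcar <;> simp only [Prod.mk.injEq] at hstep
    · rw [hstep.2, if_neg (by simp [Injected, hstep.1]), zero_add]
    · rw [hstep.2, if_neg (not_injected_of_isCarried hcar hstep.1 A), zero_add]
    · simp only [(respectsDemand_corrBelt hN).injected_iff hcar, hstep.1, hstep.2]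
      rw [← count_skipMet hAi]
      generalize skipMet d (corrBelt N d s) i (beltState N d s i).2 = L
      cases L <;> simp [List.count_cons, add_comm]

theorem propF_corrBelt (hN : 0 < N) {c : α → ℕ}
    (hfin : ∀ A, {j | corrBelt N d s j = some A}.Finite) (hs : ∀ A, s.count A = c A) :
    PropF N c (corrBelt N d s) := by
  intro e A he hused i hei hi
  have hR := respectsDemand_corrBelt (d := d) (s := s) hN
  rcases totalDemandMet_or_beltState_snd_eq_nil hN he with htot | hnil
  · simp [hR.eq_none_of_totalDemandMet htot hei] at hi
  · rcases (hR.countBefore_le A (e + 1)).lt_or_eq with hunmet | hmet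
    · have hcount := count_eq_count_injected_add_count_beltState_snd hN hunmet
      rw [hnil, List.count_nil, add_zero, hs] at hcount
      exact (count_injected_le_mouldsUsed (hfin A) (e + 1)).not_gt (hcount ▸ hused)
    · rcases hei.eq_or_lt with rfl | hlt
      · simp [hi] at he
      · exact hR.ne_some_of_countBefore_eq hmet hlt hi

end CorrespondingBelt

theorem IsBeltAssignment.exists_bound [Fintype α] {N : ℕ} {d c : α → ℕ} {b : ℕ → Option α}
    (hb : IsBeltAssignment N d c b) :
    ∃ M, ∀ j, b j ≠ none → j < M := by
  obtain ⟨m, hm⟩ := (Set.finite_iUnion fun A => hb.1 A).bddAbove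
  exact ⟨m + 1, fun j hj =>
    Nat.lt_succ_of_le (hm (Set.mem_iUnion.mpr (Option.ne_none_iff_exists'.mp hj)))⟩

section BeltAssignment

variable [DecidableEq α] {N : ℕ} {d c : α → ℕ} {b : ℕ → Option α}

theorem IsBeltAssignment.respectsDemand (hb : IsBeltAssignment N d c b) : RespectsDemand d b := by
  intro j A hj
  have hle : countBefore b A (j + 1) ≤ d A := by
    rw [countBefore, Nat.count_eq_ncard, ← hb.2.1 A]
    exact Set.ncard_le_ncard (fun k hk => hk.1) (hb.1 A)
  rwa [countBefore, Nat.count_succ, if_pos hj] at hle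

theorem IsBeltAssignment.eq_of_isCarried (hb : IsBeltAssignment N d c b) {i : ℕ}
    (h : IsCarried N d b i) : b i = b (i - N) := by
  obtain ⟨hNi, A, hA, hlt⟩ := h
  rcases hb.2.2.1 (i - N) A hA with hstay | hmet
  · rw [Nat.sub_add_cancel hNi] at hstay
    rw [hstay, hA]
  · rw [Nat.sub_add_cancel hNi] at hmet
    rw [countBefore, Nat.count_eq_ncard] at hlt
    exact absurd hmet hlt.ne

theorem IsBeltAssignment.countBefore_eq_of_propF (hb : IsBeltAssignment N d c b)
    (hF : PropF N c b) {e : ℕ} {A : α} (he : b e = none) (hused : MouldsUsed N b A < c A) :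
    countBefore b A e = d A := by
  rw [countBefore, Nat.count_eq_ncard, ← hb.2.1 A]
  congr 1
  ext j
  exact ⟨And.left, fun hj => ⟨hj, lt_of_not_ge fun hej => hF e A he hused j hej hj⟩⟩

end BeltAssignment

section InjectionSequence

variable {N : ℕ} {b : ℕ → Option α}

noncomputable def unusedMoulds [Fintype α] (N : ℕ) (c : α → ℕ) (b : ℕ → Option α) : List α :=
  univ.toList.flatMap fun A => List.replicate (c A - MouldsUsed N b A) A

theorem mem_unusedMoulds [Fintype α] {c : α → ℕ} {A : α} :
    A ∈ unusedMoulds N c b ↔ MouldsUsed N b A < c A := by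
  simp only [unusedMoulds, List.mem_flatMap, mem_toList, mem_univ, List.mem_replicate, true_and,
    exists_eq_right']
  omega

variable [DecidableEq α]

def injAt (N : ℕ) (b : ℕ → Option α) (j : ℕ) : Option α :=
  (b j).filter fun A => Injected N b A j

theorem injAt_eq_some {j : ℕ} {A : α} : injAt N b j = some A ↔ Injected N b A j := by
  simp only [injAt, Option.filter_eq_some_iff, decide_eq_true_eq]
  exact ⟨And.right, fun h => ⟨h.1, h⟩⟩

theorem injAt_eq_none {j : ℕ} : injAt N b j = none ↔ ∀ A, ¬ Injected N b A j := by
  simp only [Option.eq_none_iff_forall_ne_some, ne_eq, injAt_eq_some]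

def injectionsFrom (N : ℕ) (b : ℕ → Option α) (M i : ℕ) : List α :=
  (List.Ico i M).filterMap (injAt N b)

theorem injectionsFrom_of_not_injected {M i : ℕ} (h : ∀ A, ¬ Injected N b A i) :
    injectionsFrom N b M i = injectionsFrom N b M (i + 1) := by
  rcases lt_or_ge i M with hi | hi
  · rw [injectionsFrom, List.Ico.eq_cons hi, List.filterMap_cons_none (injAt_eq_none.mpr h)]
    rfl
  · rw [injectionsFrom, injectionsFrom, List.Ico.eq_nil_of_le hi, List.Ico.eq_nil_of_le (by omega)]

theorem injectionsFrom_of_injected {M i : ℕ} {A : α} (hi : i < M) (h : Injected N b A i) :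
    injectionsFrom N b M i = A :: injectionsFrom N b M (i + 1) := by
  rw [injectionsFrom, List.Ico.eq_cons hi, List.filterMap_cons_some (injAt_eq_some.mpr h)]
  rfl

theorem injectionsFrom_eq_nil {M i : ℕ} (h : ∀ j ≥ i, ∀ A, ¬ Injected N b A j) :
    injectionsFrom N b M i = [] :=
  List.filterMap_eq_nil_iff.mpr fun j hj => injAt_eq_none.mpr (h j (List.Ico.mem.mp hj).1)

theorem count_injectionsFrom_zero {M : ℕ} (hM : ∀ j, b j ≠ none → j < M) (A : α) :
    (injectionsFrom N b M 0).count A = MouldsUsed N b A := by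
  have hbelow : {j | Injected N b A j} = {j | Injected N b A j ∧ j < M} := by
    ext j
    exact ⟨fun h => ⟨h, hM j (by simp [h.1])⟩, And.left⟩
  rw [injectionsFrom, List.Ico.zero_bot, List.count_filterMap, MouldsUsed, hbelow,
    ← Nat.count_eq_ncard, Nat.count]
  congr 1
  funext j
  rw [beq_eq_decide, decide_eq_decide]
  exact injAt_eq_some

theorem count_unusedMoulds [Fintype α] (c : α → ℕ) (A : α) :
    (unusedMoulds N c b).count A = c A - MouldsUsed N b A := by
  rw [unusedMoulds, List.count_flatMap, Finset.sum_map_toList,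
    Finset.sum_eq_single A (fun B _ hBA => by simp [List.count_replicate, hBA])
      (fun h => absurd (mem_univ A) h)]
  simp

noncomputable def injectionSeq [Fintype α] (N : ℕ) (c : α → ℕ) (b : ℕ → Option α) (M : ℕ) :
    List α :=
  injectionsFrom N b M 0 ++ unusedMoulds N c b

theorem count_injectionSeq [Fintype α] {d c : α → ℕ} {M : ℕ} (hb : IsBeltAssignment N d c b)
    (hM : ∀ j, b j ≠ none → j < M) (A : α) : (injectionSeq N c b M).count A = c A := by
  rw [injectionSeq, List.count_append, count_injectionsFrom_zero hM, count_unusedMoulds]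
  have := hb.2.2.2 A
  omega

end InjectionSequence

theorem IsBeltAssignment.skipMet_unusedMoulds_eq_nil [Fintype α] [DecidableEq α] {N : ℕ}
    {d c : α → ℕ} {b : ℕ → Option α} (hb : IsBeltAssignment N d c b) (hF : PropF N c b)
    {e : ℕ} (he : b e = none) : skipMet d b e (unusedMoulds N c b) = [] :=
  List.dropWhile_eq_nil_iff.mpr fun A hA => by
    simp [hb.countBefore_eq_of_propF hF he (mem_unusedMoulds.mp hA)]

section Forward

variable [Fintype α] [DecidableEq α] {N : ℕ} {d c : α → ℕ} {b : ℕ → Option α} {M : ℕ}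

theorem corrBelt_injectionSeq_invariant (hN : 0 < N) (hb : IsBeltAssignment N d c b)
    (hE : PropE N b) (hF : PropF N c b) (hM : ∀ j, b j ≠ none → j < M) (n : ℕ) :
    (∀ j < n, corrBelt N d (injectionSeq N c b M) j = b j) ∧
      ((beltState N d (injectionSeq N c b M) n).2 =
          injectionsFrom N b M n ++ unusedMoulds N c b ∨
        (beltState N d (injectionSeq N c b M) n).2 = [] ∧ injectionsFrom N b M n = []) := by
  induction n with
  | zero => exact ⟨fun _ h => absurd h (Nat.not_lt_zero _), Or.inl rfl⟩
  | succ n ih =>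
    obtain ⟨hagree, hrest⟩ := ih
    have hR := hb.respectsDemand
    have hstep := corrBelt_step hN hagree
    simp only [Nat.forall_lt_succ_right]
    split_ifs at hstep with htot hcar <;> simp only [Prod.mk.injEq] at hstep
    · have hbn : b n = none := hR.eq_none_of_totalDemandMet htot le_rfl
      rw [hstep.2, ← injectionsFrom_of_not_injected fun A h => by simp [Injected, hbn] at h]
      exact ⟨⟨hagree, hstep.1.trans hbn.symm⟩, hrest⟩
    · have hbn := hb.eq_of_isCarried hcar
      rw [hstep.2, ← injectionsFrom_of_not_injected (not_injected_of_isCarried hcar hbn)]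
      exact ⟨⟨hagree, hstep.1.trans hbn.symm⟩, hrest⟩
    · set rem := (beltState N d (injectionSeq N c b M) n).2
      rw [hstep.2]
      rcases hbn : b n with _ | A
      · have hnoinj : ∀ j ≥ n, ∀ A, ¬ Injected N b A j := fun j hj A h =>
          (hE A j n h hbn).not_ge hj
        have hskip : skipMet d b n rem = [] := by
          rcases hrest with h | h
          · rw [h, injectionsFrom_eq_nil hnoinj, List.nil_append,
              hb.skipMet_unusedMoulds_eq_nil hF hbn]
          · rw [h.1]
            rfl
        rw [hstep.1, hskip]
        exact ⟨⟨hagree, rfl⟩, Or.inr ⟨rfl, injectionsFrom_eq_nil fun j hj => hnoinj j (by omega)⟩⟩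
      · have hfrom := injectionsFrom_of_injected (hM n (by simp [hbn]))
          ((hR.injected_iff hcar).mpr hbn)
        have hrem : rem = A :: (injectionsFrom N b M (n + 1) ++ unusedMoulds N c b) := by
          rcases hrest with h | h
          · rw [h, hfrom, List.cons_append]
          · simp [hfrom] at h
        have hskip : skipMet d b n rem = rem := by
          rw [hrem, skipMet, List.dropWhile_cons_of_neg (by simpa using hR n A hbn)]
        rw [hstep.1, hskip, hrem]
        exact ⟨⟨hagree, rfl⟩, Or.inl rfl⟩

end Forward

theorem statement7_general [Fintype α] [DecidableEq α] (N : ℕ) (hN : 0 < N)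
    (d c : α → ℕ) (b : ℕ → Option α) (hb : IsBeltAssignment N d c b) :
    (PropE N b ∧ PropF N c b) ↔
      ∃ s : List α, (∀ A : α, s.count A = c A) ∧ ∀ i : ℕ, corrBelt N d s i = b i := by
  constructor
  · rintro ⟨hE, hF⟩
    obtain ⟨M, hM⟩ := hb.exists_bound
    exact ⟨injectionSeq N c b M, count_injectionSeq hb hM, fun i =>
      (corrBelt_injectionSeq_invariant hN hb hE hF hM (i + 1)).1 i i.lt_succ_self⟩
  · rintro ⟨s, hs, hsb⟩
    obtain rfl : corrBelt N d s = b := funext hsb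
    exact ⟨propE_corrBelt hN, propF_corrBelt hN hb.1 hs⟩

/-- **Observation 5.** A belt assignment `b` satisfies Properties (E) and
(F) if and only if there is an injection sequence `s` (containing each type
`A` exactly `c A` times) whose corresponding belt function equals `b`. -/
theorem statement7 [Fintype α] [DecidableEq α] (N : ℕ) (hN : 0 < N)
    (d c : α → ℕ) (hd : ∀ A, 0 < d A) (hc : ∀ A, 0 < c A)
    (b : ℕ → Option α) (hb : IsBeltAssignment N d c b) :
    (PropE N b ∧ PropF N c b) ↔
      ∃ s : List α, (∀ A : α, s.count A = c A) ∧ ∀ i : ℕ, corrBelt N d s i = b i :=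
  statement7_general N hN d c b hb
end

section
/- For every belt assignment b and every type A ∈ 𝒯, the number of moulds of type A used by b is at most N. (Hence one may always assume c_A ≤ N.) -/
open Finset

variable {α : Type*}

/-- For every belt assignment `b` and every type `A`, at most `N` moulds of
type `A` are used (hence one may always assume `c A ≤ N`). -/
theorem statement12 (N : ℕ) (hN : 0 < N)
    (d c : α → ℕ) (hd : ∀ A, 0 < d A) (hc : ∀ A, 0 < c A)
    (b : ℕ → Option α) (hb : IsBeltAssignment N d c b) (A : α) :
    MouldsUsed N b A ≤ N := by
  obtain ⟨hfin, hcount, hper, _⟩ := hb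
  have key : ∀ i j : ℕ, b i = some A → b j = some A → ∀ m : ℕ, i + m * N ≤ j →
      b (i + m * N) = some A := by
    intro i j hi hj m
    induction m with
    | zero => intro _; simpa using hi
    | succ m ih =>
      intro hle
      have hexp : (m + 1) * N = m * N + N := by ring
      have hle' : i + m * N ≤ j := by omega
      have hm : b (i + m * N) = some A := ih hle'
      rcases hper (i + m * N) A hm with h | h
      · rw [hexp, ← Nat.add_assoc]; exact h
      · exfalso
        have hsub : {t | b t = some A ∧ t < i + m * N + N} ⊆ {t | b t = some A} := by
          intro t ht; exact ht.1
        have heq : {t | b t = some A ∧ t < i + m * N + N} = {t | b t = some A} :=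
          Set.eq_of_subset_of_ncard_le hsub (by rw [h, hcount A]) (hfin A)
        have hjmem : j ∈ {t | b t = some A} := hj
        rw [← heq] at hjmem
        have : j < i + m * N + N := hjmem.2
        omega
  have hinj : Set.InjOn (fun i => i % N) {i | Injected N b A i} := by
    have main : ∀ i j : ℕ, Injected N b A i → Injected N b A j → i < j →
        i % N = j % N → False := by
      intro i j hi hj hij hmod
      have hdvd : N ∣ (j - i) := (Nat.modEq_iff_dvd' hij.le).mp hmod
      obtain ⟨k, hk⟩ := hdvd
      have hkne : k ≠ 0 := by rintro rfl; simp at hk; omega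
      obtain ⟨k', rfl⟩ : ∃ k', k = k' + 1 := ⟨k - 1, by omega⟩
      rw [Nat.mul_comm] at hk
      have hexp : (k' + 1) * N = k' * N + N := by ring
      have hle : i + k' * N ≤ j := by omega
      have hkey := key i j hi.1 hj.1 k' hle
      have hjn : j - N = i + k' * N := by omega
      have hjN : b (j - N) = some A := by rw [hjn]; exact hkey
      rcases hj.2 with h | h
      · omega
      · exact h hjN
    intro i hi j hj hmod
    rcases lt_trichotomy i j with h | h | h
    · exact absurd (main i j hi hj h hmod) (by simp)
    · exact h
    · exact absurd (main j i hj hi h hmod.symm) (by simp)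
  have hmap : ∀ i ∈ {i | Injected N b A i}, i % N ∈ Set.Iio N := by
    intro i _; exact Nat.mod_lt _ hN
  have hle := Set.ncard_le_ncard_of_injOn (fun i => i % N) hmap hinj (Set.finite_Iio N)
  unfold MouldsUsed
  calc {i | Injected N b A i}.ncard ≤ (Set.Iio N).ncard := hle
    _ = N := by rw [Set.ncard_eq_toFinset_card', Set.toFinset_Iio, Nat.card_Iio]
end
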